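/- arXiv:1611.02824 — 7 statements merged into one kernel-verified Lean document; each statement's English description precedes it below -/
import Mathlib

section
/- Let X and Y be locally compact Hausdorff spaces, k : X × Y → [0,∞] a lower semicontinuous kernel, H ⊆ X and L ⊆ Y. Then the function F : M(H) × L → [0,∞], (μ, y) ↦ U^μ(y) = ∫_X k(x,y) dμ(x), is lower semicontinuous, where M(H) carries the vague topology. -/
open MeasureTheory Topology Filter ENNReal

noncomputable section

/-- The vague topology on measures: the coarsest topology making
`μ ↦ ∫ f dμ` continuous for every continuous compactly supported `f`. -/
def vagueTop (X : Type*) [TopologicalSpace X] [MeasurableSpace X] :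
    TopologicalSpace (Measure X) :=
  ⨅ (f : X → ℝ) (_ : Continuous f) (_ : HasCompactSupport f),
    TopologicalSpace.induced (fun μ : Measure X => ∫ x, f x ∂μ) inferInstance

/-- `μ` is concentrated on `H`: every compact set meets the complement of `H`
in a set of zero (outer) measure. -/
def Concentrated {X : Type*} [TopologicalSpace X] [MeasurableSpace X]
    (μ : Measure X) (H : Set X) : Prop :=
  ∀ K : Set X, IsCompact K → μ (K ∩ Hᶜ) = 0

/-- `M(H)`: the positive regular Radon measures of finite total mass concentrated on `H`. -/
def MM {X : Type*} [TopologicalSpace X] [MeasurableSpace X] (H : Set X) :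
    Set (Measure X) :=
  {μ | IsFiniteMeasure μ ∧ μ.Regular ∧ μ.InnerRegular ∧ Concentrated μ H}

/-- `M₁(H)`: probability measures in `M(H)`. -/
def M1 {X : Type*} [TopologicalSpace X] [MeasurableSpace X] (H : Set X) :
    Set (Measure X) :=
  {μ ∈ MM H | IsProbabilityMeasure μ}

/-- The potential `U^μ(y) = ∫ k(x,y) dμ(x)`. -/
def pot {X Y : Type*} [MeasurableSpace X] (k : X → Y → ℝ≥0∞) (μ : Measure X) (y : Y) : ℝ≥0∞ :=
  ∫⁻ x, k x y ∂μ

/-- The mutual energy `E(μ,ν) = ∫∫ k(x,y) dμ(x)dν(y)`. -/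
def energy {X Y : Type*} [MeasurableSpace X] [MeasurableSpace Y] (k : X → Y → ℝ≥0∞)
    (μ : Measure X) (ν : Measure Y) : ℝ≥0∞ :=
  ∫⁻ p : X × Y, k p.1 p.2 ∂(μ.prod ν)

/-- `q(R,S) = inf_{μ∈R} sup_{ν∈S} E(μ,ν)`. -/
def qup {X Y : Type*} [MeasurableSpace X] [MeasurableSpace Y] (k : X → Y → ℝ≥0∞)
    (R : Set (Measure X)) (S : Set (Measure Y)) : ℝ≥0∞ :=
  ⨅ μ ∈ R, ⨆ ν ∈ S, energy k μ ν

/-- `q̲(R,S) = sup_{μ∈R} inf_{ν∈S} E(μ,ν)`. -/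
def qlow {X Y : Type*} [MeasurableSpace X] [MeasurableSpace Y] (k : X → Y → ℝ≥0∞)
    (R : Set (Measure X)) (S : Set (Measure Y)) : ℝ≥0∞ :=
  ⨆ μ ∈ R, ⨅ ν ∈ S, energy k μ ν

/-- The (Wiener) energy of a set of measures: `w(R) = inf_{μ∈R} E(μ,μ)`. -/
def ww {X : Type*} [MeasurableSpace X] (k : X → X → ℝ≥0∞) (R : Set (Measure X)) : ℝ≥0∞ :=
  ⨅ μ ∈ R, energy k μ μ

/-- Convexity of a set of measures. -/
def ConvexM {X : Type*} [MeasurableSpace X] (R : Set (Measure X)) : Prop :=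
  ∀ μ ∈ R, ∀ ν ∈ R, ∀ a b : ℝ≥0∞, a + b = 1 → a • μ + b • ν ∈ R

/-- The extreme points of a set of measures. -/
def ExtremePts {X : Type*} [MeasurableSpace X] (R : Set (Measure X)) : Set (Measure X) :=
  {σ ∈ R | ∀ μ ∈ R, ∀ ν ∈ R, ∀ a b : ℝ≥0∞, 0 < a → 0 < b → a + b = 1 →
    σ = a • μ + b • ν → σ = μ ∧ σ = ν}

/-- `w*`-compactness (= compactness in the vague topology, these coincide on compact sets). -/
def VCompact {X : Type*} [TopologicalSpace X] [MeasurableSpace X] (R : Set (Measure X)) : Prop :=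
  @IsCompact _ (vagueTop X) R

/-- The (topological) support of a measure. -/
def msupp {X : Type*} [TopologicalSpace X] [MeasurableSpace X] (μ : Measure X) : Set X :=
  {x | ∀ U ∈ 𝓝 x, 0 < μ U}

/-- A measure has compact support. -/
def CompactSupp {X : Type*} [TopologicalSpace X] [MeasurableSpace X] (μ : Measure X) : Prop :=
  ∃ K : Set X, IsCompact K ∧ μ Kᶜ = 0

/-- Frostman's maximum principle. -/
def Frostman {X : Type*} [TopologicalSpace X] [MeasurableSpace X] (k : X → X → ℝ≥0∞) : Prop :=
  ∀ μ : Measure X, μ ∈ MM (Set.univ : Set X) → CompactSupp μ →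
    (⨆ x, pot k μ x) = ⨆ x ∈ msupp μ, pot k μ x

/-- An appropriate set of measures. -/
def Appropriate {X : Type*} [TopologicalSpace X] [MeasurableSpace X] (k : X → X → ℝ≥0∞)
    (H : Set X) (R : Set (Measure X)) : Prop :=
  ∀ μ ∈ R, energy k μ μ ≠ ⊤ → ∀ t : ℝ≥0∞,
    (∀ ν ∈ R, energy k ν ν ≠ ⊤ → (∃ K : Set X, IsCompact K ∧ K ⊆ H ∧ ν Kᶜ = 0) →
      t ≤ energy k ν μ) →
    ∀ᵐ x ∂μ, x ∈ H → t ≤ pot k μ x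

/-- `R_n`: the measures of `R` whose support has at most `n` points. -/
def Rn {X : Type*} [TopologicalSpace X] [MeasurableSpace X]
    (R : Set (Measure X)) (n : ℕ) : Set (Measure X) :=
  {μ ∈ R | ∃ s : Finset X, msupp μ ⊆ ↑s ∧ s.card ≤ n}

/-- `R^e_{Φ,g,A}`: probability measures satisfying the moment equality constraints on `A`. -/
def Re {X Z : Type*} [MeasurableSpace X] (Φ : X → Z → ℝ) (g : Z → ℝ) (A : Set Z) :
    Set (Measure X) :=
  {μ | IsProbabilityMeasure μ ∧ ∀ z ∈ A, ∫ x, Φ x z ∂μ = g z}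


/-!
Fix `(μ₀, y₀)` and `c < U^{μ₀}(y₀)`. Cutting `k(·, y₀)` into a staircase of indicators of open
sets, and approximating each open set from inside by a compact set and an Urysohn function
(regularity of `μ₀`), gives `g ∈ C_c(X, ℝ≥0)` with `g ≤ k(·, y₀)` and `c < ∫ g dμ₀`. Lowering `g`
to `(g - ε)⁺` keeps `c < ∫ (g - ε)⁺ dμ₀`, and now `(g - ε)⁺ ≤ k(·, y)` for all `y` near `y₀`:
on the compact set `{g ≥ ε}` this follows from the strict inequality `g - ε < k(·, y₀)` and the
joint lower semicontinuity of `k`, and off it `(g - ε)⁺ = 0`. As `μ ↦ ∫ (g - ε)⁺ dμ` is vaguely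
continuous, `U^μ(y) ≥ ∫ (g - ε)⁺ dμ > c` for `(μ, y)` near `(μ₀, y₀)`.
-/

open scoped NNReal CompactlySupported

lemma ENNReal.exists_pos_add_mul_lt {a b m : ℝ≥0∞} (hab : a < b) (hm : m ≠ ∞) :
    ∃ ε : ℝ≥0, 0 < ε ∧ a + ε * m < b := by
  have hlim : Tendsto (fun ε : ℝ≥0 => a + ε * m) (𝓝[>] 0) (𝓝 a) := by
    have := (ENNReal.Tendsto.mul_const (ENNReal.continuous_coe.tendsto 0) (Or.inr hm)).const_add a
    simpa using this.mono_left nhdsWithin_le_nhds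
  obtain ⟨ε, hεb, hε⟩ := ((hlim.eventually (gt_mem_nhds hab)).and self_mem_nhdsWithin).exists
  exact ⟨ε, hε, hεb⟩

section Staircase

def staircase (h : ℝ≥0∞) (n : ℕ) (t : ℝ≥0∞) : ℝ≥0∞ :=
  ∑ j ∈ Finset.range n, if (j + 1) * h < t then h else 0

variable {h t : ℝ≥0∞}

lemma staircase_succ (n : ℕ) :
    staircase h (n + 1) t = staircase h n t + if (n + 1) * h < t then h else 0 := by
  simp [staircase, Finset.sum_range_succ]

lemma staircase_le_mul (n : ℕ) : staircase h n t ≤ n * h := by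
  calc staircase h n t ≤ ∑ _j ∈ Finset.range n, h :=
        Finset.sum_le_sum fun j _ => by split_ifs <;> simp
    _ = n * h := by simp

lemma staircase_eq_of_lt {n : ℕ} (hn : n * h < t) : staircase h n t = n * h := by
  rw [staircase, Finset.sum_congr rfl fun j hj => if_pos ?_]
  · simp
  · refine lt_of_le_of_lt ?_ hn
    gcongr
    exact_mod_cast Finset.mem_range.1 hj

lemma staircase_le (n : ℕ) : staircase h n t ≤ t := by
  induction n with
  | zero => simp [staircase]
  | succ n ih =>
    rw [staircase_succ]
    split_ifs with hlt
    · calc staircase h n t + h ≤ n * h + h := by gcongr; exact staircase_le_mul n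
        _ = (n + 1 : ℕ) * h := by push_cast; ring
        _ ≤ t := by exact_mod_cast hlt.le
    · simpa using ih

lemma min_le_staircase_add (n : ℕ) : min t (n * h) ≤ staircase h n t + h := by
  induction n with
  | zero => simp
  | succ n ih =>
    have hstep : staircase h n t ≤ staircase h (n + 1) t := by
      rw [staircase_succ]
      exact le_self_add
    refine le_trans ?_ (by gcongr : staircase h n t + h ≤ staircase h (n + 1) t + h)
    rcases lt_or_ge (n * h) t with hlt | hle
    · calc min t ((n + 1 : ℕ) * h) ≤ (n + 1 : ℕ) * h := min_le_right _ _
        _ = staircase h n t + h := by rw [staircase_eq_of_lt hlt]; push_cast; ring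
    · calc min t ((n + 1 : ℕ) * h) ≤ min t (n * h) := by simp [hle]
        _ ≤ staircase h n t + h := ih

lemma staircase_comp_eq_sum_indicator {X : Type*} (φ : X → ℝ≥0∞) (n : ℕ) (x : X) :
    staircase h n (φ x) =
      ∑ j ∈ Finset.range n, {x | (j + 1) * h < φ x}.indicator (fun _ => h) x := by
  simp [staircase, Set.indicator_apply]

end Staircase

section SupIntegralCc

variable {X : Type*} [TopologicalSpace X] [MeasurableSpace X] {μ : Measure X}
  {φ ψ : X → ℝ≥0∞}

/-- The upper integral `sup {∫ g dμ : g ∈ C_c(X, ℝ≥0), g ≤ φ}` by which the paper defines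
potentials. -/
def supIntegralCc (μ : Measure X) (φ : X → ℝ≥0∞) : ℝ≥0∞ :=
  ⨆ g : {g : C_c(X, ℝ≥0) // ∀ x, (g x : ℝ≥0∞) ≤ φ x}, ∫⁻ x, g.1 x ∂μ

lemma lintegral_le_supIntegralCc {g : C_c(X, ℝ≥0)} (hg : ∀ x, (g x : ℝ≥0∞) ≤ φ x) :
    ∫⁻ x, g x ∂μ ≤ supIntegralCc μ φ :=
  le_iSup (fun g : {g : C_c(X, ℝ≥0) // ∀ x, (g x : ℝ≥0∞) ≤ φ x} => ∫⁻ x, g.1 x ∂μ) ⟨g, hg⟩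

lemma exists_lt_lintegral_of_lt_supIntegralCc {c : ℝ≥0∞} (hc : c < supIntegralCc μ φ) :
    ∃ g : C_c(X, ℝ≥0), (∀ x, (g x : ℝ≥0∞) ≤ φ x) ∧ c < ∫⁻ x, g x ∂μ := by
  obtain ⟨g, hg⟩ := lt_iSup_iff.1 hc
  exact ⟨g.1, g.2, hg⟩

lemma supIntegralCc_mono (hφψ : φ ≤ ψ) : supIntegralCc μ φ ≤ supIntegralCc μ ψ :=
  iSup_le fun g => lintegral_le_supIntegralCc fun x => (g.2 x).trans (hφψ x)

lemma supIntegralCc_add_le [OpensMeasurableSpace X] :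
    supIntegralCc μ φ + supIntegralCc μ ψ ≤ supIntegralCc μ (φ + ψ) := by
  have : ∀ φ : X → ℝ≥0∞, Nonempty {g : C_c(X, ℝ≥0) // ∀ x, (g x : ℝ≥0∞) ≤ φ x} :=
    fun φ => ⟨⟨0, fun x => by simp⟩⟩
  refine ENNReal.iSup_add_iSup_le fun g₁ g₂ => ?_
  rw [← lintegral_add_left (map_continuous g₁.1).measurable.coe_nnreal_ennreal]
  exact lintegral_le_supIntegralCc (g := g₁.1 + g₂.1) fun x => by
    simpa using add_le_add (g₁.2 x) (g₂.2 x)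

lemma sum_supIntegralCc_le [OpensMeasurableSpace X] {ι : Type*} (s : Finset ι)
    (φ : ι → X → ℝ≥0∞) : ∑ i ∈ s, supIntegralCc μ (φ i) ≤ supIntegralCc μ (∑ i ∈ s, φ i) := by
  classical
  induction s using Finset.induction_on with
  | empty => simp
  | insert i s hi ih =>
    rw [Finset.sum_insert hi, Finset.sum_insert hi]
    exact (by gcongr : _ ≤ supIntegralCc μ (φ i) + supIntegralCc μ (∑ i ∈ s, φ i)).trans
      supIntegralCc_add_le

lemma IsOpen.lintegral_indicator_le_supIntegralCc [OpensMeasurableSpace X] [T2Space X]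
    [LocallyCompactSpace X] [μ.Regular] {U : Set X} (hU : IsOpen U) (a : ℝ≥0) :
    ∫⁻ x, U.indicator (fun _ => (a : ℝ≥0∞)) x ∂μ ≤
      supIntegralCc μ (U.indicator fun _ => (a : ℝ≥0∞)) := by
  rw [lintegral_indicator_const hU.measurableSet, hU.measure_eq_iSup_isCompact μ]
  simp only [ENNReal.mul_iSup, iSup_le_iff]
  intro K hKU hK
  obtain ⟨f, hfK, hfU, hfc, hf01⟩ := exists_continuous_one_zero_of_isCompact hK
    hU.isClosed_compl (Set.disjoint_compl_right_iff_subset.2 hKU)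
  let g : C_c(X, ℝ≥0) := a • CompactlySupportedContinuousMap.nnrealPart ⟨f, hfc⟩
  have hg : ∀ x, (g x : ℝ≥0∞) = a * ENNReal.ofReal (f x) := fun x => by
    simp [g, CompactlySupportedContinuousMap.nnrealPart_apply, ENNReal.ofReal]
  calc (a : ℝ≥0∞) * μ K = ∫⁻ x, K.indicator (fun _ => (a : ℝ≥0∞)) x ∂μ :=
        (lintegral_indicator_const hK.measurableSet _).symm
    _ ≤ ∫⁻ x, g x ∂μ := lintegral_mono fun x => by
        by_cases hx : x ∈ K
        · simp [hg, hfK hx, hx]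
        · simp [hx]
    _ ≤ _ := lintegral_le_supIntegralCc fun x => by
        by_cases hx : x ∈ U
        · have : ENNReal.ofReal (f x) ≤ 1 := ENNReal.ofReal_le_one.2 (hf01 x).2
          simpa [hg, hx] using (by gcongr : (a : ℝ≥0∞) * ENNReal.ofReal (f x) ≤ a * 1)
        · simp [hg, hx, hfU hx]

lemma LowerSemicontinuous.lintegral_staircase_le_supIntegralCc [OpensMeasurableSpace X]
    [T2Space X] [LocallyCompactSpace X] [μ.Regular] (hφ : LowerSemicontinuous φ) (h : ℝ≥0)
    (n : ℕ) : ∫⁻ x, staircase h n (φ x) ∂μ ≤ supIntegralCc μ φ := by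
  set V : ℕ → Set X := fun j => {x | (j + 1) * (h : ℝ≥0∞) < φ x}
  have hV : ∀ j, IsOpen (V j) := fun j => hφ.isOpen_preimage _
  simp_rw [staircase_comp_eq_sum_indicator]
  rw [lintegral_finsetSum _ fun j _ => measurable_const.indicator (hV j).measurableSet]
  calc _ ≤ ∑ j ∈ Finset.range n, supIntegralCc μ ((V j).indicator fun _ => (h : ℝ≥0∞)) :=
        Finset.sum_le_sum fun j _ => (hV j).lintegral_indicator_le_supIntegralCc h
    _ ≤ _ := sum_supIntegralCc_le _ _
    _ ≤ _ := supIntegralCc_mono fun x => by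
        simpa [V, ← staircase_comp_eq_sum_indicator] using staircase_le n

theorem LowerSemicontinuous.lintegral_le_supIntegralCc [BorelSpace X] [T2Space X]
    [LocallyCompactSpace X] [IsFiniteMeasure μ] [μ.Regular] (hφ : LowerSemicontinuous φ) :
    ∫⁻ x, φ x ∂μ ≤ supIntegralCc μ φ := by
  by_contra! hlt
  obtain ⟨h, hh, hlt⟩ := ENNReal.exists_pos_add_mul_lt hlt (measure_ne_top μ Set.univ)
  refine hlt.not_ge ?_
  have htrunc : ∫⁻ x, φ x ∂μ = ⨆ n : ℕ, ∫⁻ x, min (φ x) (n * h) ∂μ := by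
    rw [← lintegral_iSup (fun n => hφ.measurable.min measurable_const)
      fun m n hmn x => min_le_min_left _ (by gcongr)]
    congr with x
    rw [← inf_iSup_eq, ← ENNReal.iSup_mul, ENNReal.iSup_natCast,
      ENNReal.top_mul (by simpa using hh.ne'), inf_top_eq]
  rw [htrunc]
  refine iSup_le fun n => ?_
  calc ∫⁻ x, min (φ x) (n * h) ∂μ ≤ ∫⁻ x, (staircase h n (φ x) + h) ∂μ :=
        lintegral_mono fun x => min_le_staircase_add n
    _ = ∫⁻ x, staircase h n (φ x) ∂μ + h * μ Set.univ := by
        rw [lintegral_add_right _ measurable_const, lintegral_const]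
    _ ≤ supIntegralCc μ φ + h * μ Set.univ := by
        gcongr
        exact hφ.lintegral_staircase_le_supIntegralCc h n

end SupIntegralCc

lemma exists_lt_lintegral_tsub {X : Type*} [MeasurableSpace X] {μ : Measure X}
    [IsFiniteMeasure μ] {g : X → ℝ≥0} {c : ℝ≥0∞} (hc : c < ∫⁻ x, g x ∂μ) :
    ∃ ε : ℝ≥0, 0 < ε ∧ c < ∫⁻ x, ((g x - ε : ℝ≥0) : ℝ≥0∞) ∂μ := by
  obtain ⟨ε, hε, hcε⟩ := ENNReal.exists_pos_add_mul_lt hc (measure_ne_top μ Set.univ)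
  refine ⟨ε, hε, lt_of_add_lt_add_right (hcε.trans_le ?_)⟩
  calc ∫⁻ x, g x ∂μ ≤ ∫⁻ x, (((g x - ε : ℝ≥0) : ℝ≥0∞) + ε) ∂μ :=
        lintegral_mono fun x => by
          rw [← ENNReal.coe_add]
          exact ENNReal.coe_le_coe.2 le_tsub_add
    _ = ∫⁻ x, ((g x - ε : ℝ≥0) : ℝ≥0∞) ∂μ + ε * μ Set.univ := by
        rw [lintegral_add_right _ measurable_const, lintegral_const]

lemma LowerSemicontinuous.eventually_forall_tsub_le {X Y : Type*} [TopologicalSpace X]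
    [TopologicalSpace Y] {k : X → Y → ℝ≥0∞} (hk : LowerSemicontinuous fun p : X × Y => k p.1 p.2)
    {g : X → ℝ≥0} (hg : Continuous g) (hgc : HasCompactSupport g) {y₀ : Y}
    (hgk : ∀ x, (g x : ℝ≥0∞) ≤ k x y₀) {ε : ℝ≥0} (hε : 0 < ε) :
    ∀ᶠ y in 𝓝 y₀, ∀ x, ((g x - ε : ℝ≥0) : ℝ≥0∞) ≤ k x y := by
  have hC : IsCompact {x | ε ≤ g x} := hgc.of_isClosed_subset (isClosed_le continuous_const hg)
    fun x hx => subset_tsupport g (hε.trans_le hx).ne'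
  have hnear : ∀ x ∈ {x | ε ≤ g x},
      ∀ᶠ q : Y × X in 𝓝 (y₀, x), ((g q.2 - ε : ℝ≥0) : ℝ≥0∞) < k q.2 q.1 := fun x hx => by
    have hlt : ((g x - ε : ℝ≥0) : ℝ≥0∞) < k x y₀ :=
      (ENNReal.coe_lt_coe.2 (tsub_lt_self (hε.trans_le hx) hε)).trans_le (hgk x)
    obtain ⟨b, hgb, hbk⟩ := exists_between hlt
    have hcont : Continuous fun x => ((g x - ε : ℝ≥0) : ℝ≥0∞) :=
      ENNReal.continuous_coe.comp (hg.sub continuous_const)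
    filter_upwards
      [((hcont.tendsto x).comp (continuous_snd.tendsto (y₀, x))).eventually_lt_const hgb,
      (continuous_swap.tendsto (y₀, x)).eventually (hk (x, y₀) b hbk)] with q h₁ h₂
    exact h₁.trans h₂
  filter_upwards [hC.eventually_forall_of_forall_eventually
    (P := fun y x => ((g x - ε : ℝ≥0) : ℝ≥0∞) < k x y) hnear] with y hy x
  by_cases hx : ε ≤ g x
  · exact (hy x hx).le
  · simp [tsub_eq_zero_of_le (not_le.1 hx).le]

lemma continuous_integral_vagueTop {X : Type*} [TopologicalSpace X] [MeasurableSpace X]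
    {f : X → ℝ} (hf : Continuous f) (hfc : HasCompactSupport f) :
    letI := vagueTop X
    Continuous fun μ : Measure X => ∫ x, f x ∂μ :=
  continuous_iInf_dom <| continuous_iInf_dom (i := hf) <|
    continuous_iInf_dom (i := hfc) continuous_induced_dom

lemma continuousOn_lintegral_vagueTop {X : Type*} [TopologicalSpace X] [MeasurableSpace X]
    [OpensMeasurableSpace X] {g : X → ℝ≥0} (hg : Continuous g) (hgc : HasCompactSupport g) :
    letI := vagueTop X
    ContinuousOn (fun μ : Measure X => ∫⁻ x, g x ∂μ) {μ | IsFiniteMeasure μ} := by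
  let _ := vagueTop X
  have hgℝ : Continuous fun x => (g x : ℝ) := NNReal.continuous_coe.comp hg
  have hgcℝ : HasCompactSupport fun x => (g x : ℝ) := hgc.comp_left NNReal.coe_zero
  have hcont := ENNReal.continuous_ofReal.comp (continuous_integral_vagueTop hgℝ hgcℝ)
  exact hcont.continuousOn.congr fun μ (hμ : IsFiniteMeasure μ) =>
    lintegral_coe_eq_integral g (hgℝ.integrable_of_hasCompactSupport hgcℝ)

theorem statement0_general {X Y : Type*} [TopologicalSpace X] [MeasurableSpace X] [BorelSpace X]
    [LocallyCompactSpace X] [T2Space X]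
    [TopologicalSpace Y]
    (k : X → Y → ℝ≥0∞) (hk : LowerSemicontinuous fun p : X × Y => k p.1 p.2)
    (H : Set X) (L : Set Y) :
    letI : TopologicalSpace (Measure X) := vagueTop X
    LowerSemicontinuous fun p : ↥(MM H) × ↥L => pot k (p.1 : Measure X) (p.2 : Y) := by
  let _ := vagueTop X
  rintro ⟨⟨μ, hfin, hreg, _⟩, y₀, _⟩ c (hc : c < ∫⁻ x, k x y₀ ∂μ)
  have hφ : LowerSemicontinuous fun x => k x y₀ := hk.comp (Continuous.prodMk_left y₀)
  obtain ⟨g, hgk, hcg⟩ :=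
    exists_lt_lintegral_of_lt_supIntegralCc (hc.trans_le hφ.lintegral_le_supIntegralCc)
  obtain ⟨ε, hε, hcε⟩ := exists_lt_lintegral_tsub hcg
  have hgε : Continuous fun x => g x - ε := (map_continuous g).sub continuous_const
  have hgεc : HasCompactSupport fun x => g x - ε :=
    g.hasCompactSupport.comp_left (g := fun t : ℝ≥0 => t - ε) (zero_tsub ε)
  have hcont : Continuous fun q : ↥(MM H) × ↥L => ∫⁻ x, ((g x - ε : ℝ≥0) : ℝ≥0∞) ∂q.1.1 :=
    (continuousOn_lintegral_vagueTop hgε hgεc).comp_continuous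
      (continuous_subtype_val.comp continuous_fst) fun q => q.1.2.1
  filter_upwards [hcont.continuousAt.eventually_const_lt hcε,
    ((continuous_subtype_val.comp continuous_snd).tendsto _).eventually
      (hk.eventually_forall_tsub_le (map_continuous g) g.hasCompactSupport hgk hε)] with q hq hle
  exact hq.trans_le (lintegral_mono hle)

/-- lower semicontinuity of `(μ, y) ↦ U^μ(y)` on `M(H) × L`
with the vague topology on `M(H)`. -/
theorem statement0 {X Y : Type*} [TopologicalSpace X] [MeasurableSpace X] [BorelSpace X]
    [LocallyCompactSpace X] [T2Space X]
    [TopologicalSpace Y] [LocallyCompactSpace Y] [T2Space Y]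
    (k : X → Y → ℝ≥0∞) (hk : LowerSemicontinuous fun p : X × Y => k p.1 p.2)
    (H : Set X) (L : Set Y) :
    letI : TopologicalSpace (Measure X) := vagueTop X
    LowerSemicontinuous fun p : ↥(MM H) × ↥L => pot k (p.1 : Measure X) (p.2 : Y) :=
  statement0_general k hk H L

end
end

section
/- Let k be a lower semicontinuous symmetric kernel on X × X with values in [0,∞], let H, L ⊆ X, and let R(H), S(H) ⊆ M(H) and R̃(L), S̃(L) ⊆ M(L) be sets of measures such that: (i) inf_{ν∈S̃(L)} ∫_L U^μ dν ≤ inf_{ν∈R̃(L)} ∫_L U^μ dν for all μ ∈ M(H), and (ii) sup_{ν∈R(H)} ∫_H U^μ dν ≤ sup_{ν∈S(H)} ∫_H U^μ dν for all μ ∈ M(L). Then q̲(R(H), S̃(L)) ≤ q(R̃(L), S(H)). -/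
/-!
The energy `E(μ, ν)` is the integral over `μ.prod ν` of a function that need not be measurable
for the product σ-algebra, so Tonelli does not apply to it directly. The inequality
`E(μ, ν) ≤ ∫ U^μ dν` holds for any integrand, by passing to a measurable minorant with the same
integral. For the converse, `∫ U^μ dν` is approximated from below by step functions on disjoint
compact sets, and lower semicontinuity of `k` together with the tube lemma turns these into
product-measurable minorants of `k`. Hence `E(μ, ν) = ∫ U^μ dν` for finite inner regular measures,
and the symmetry of `k` gives the reciprocity `∫ U^μ dσ = ∫ U^σ dμ`. For `μ ∈ R(H)`, `σ ∈ R̃(L)`,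
hypotheses (i) and (ii) then chain together as
`inf_{S̃} E(μ, ·) ≤ inf_{R̃} ∫ U^μ ≤ ∫ U^μ dσ = ∫ U^σ dμ ≤ sup_{R} ∫ U^σ ≤ sup_{S} E(σ, ·)`.
-/

open MeasureTheory Topology Filter ENNReal

noncomputable section

open scoped NNReal

theorem ENNReal.exists_lt_one_lt_mul {a b : ℝ≥0∞} (hab : a < b) (hb : b ≠ ⊤) :
    ∃ θ < 1, a < θ * b := by
  have hb0 : b ≠ 0 := (pos_of_gt hab).ne'
  obtain ⟨θ, hθa, hθ1⟩ := exists_between ((ENNReal.div_lt_iff (.inl hb0) (.inl hb)).2 (by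
    rwa [one_mul]))
  exact ⟨θ, hθ1, (ENNReal.div_lt_iff (.inl hb0) (.inl hb)).1 hθa⟩

theorem Finset.sum_indicator_le_of_pairwiseDisjoint {ι α : Type*} {s : Finset ι}
    {K : ι → Set α} (hK : (s : Set ι).PairwiseDisjoint K) {f : ι → α → ℝ≥0∞} {g : α → ℝ≥0∞}
    (hfg : ∀ i ∈ s, ∀ x ∈ K i, f i x ≤ g x) (x : α) :
    ∑ i ∈ s, (K i).indicator (f i) x ≤ g x := by
  by_cases hx : ∃ i ∈ s, x ∈ K i
  · obtain ⟨i, hi, hxi⟩ := hx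
    rw [Finset.sum_eq_single_of_mem i hi fun j hj hji => Set.indicator_of_notMem
      (fun hxj => Set.disjoint_left.1 (hK hj hi hji) hxj hxi) _, Set.indicator_of_mem hxi]
    exact hfg i hi x hxi
  · push Not at hx
    rw [Finset.sum_eq_zero fun i hi => Set.indicator_of_notMem (hx i hi) _]
    exact zero_le

theorem MeasureTheory.lintegral_finset_sum_indicator_const {ι α : Type*} [MeasurableSpace α]
    {μ : Measure α} {s : Finset ι} {K : ι → Set α} (hK : ∀ i ∈ s, MeasurableSet (K i))
    (d : ι → ℝ≥0∞) :
    ∫⁻ x, ∑ i ∈ s, (K i).indicator (fun _ => d i) x ∂μ = ∑ i ∈ s, d i * μ (K i) := by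
  rw [lintegral_finsetSum _ fun i hi => measurable_const.indicator (hK i hi)]
  exact Finset.sum_congr rfl fun i hi => lintegral_indicator_const (hK i hi) _

theorem MeasureTheory.lintegral_prod_le_lintegral_lintegral {α β : Type*} [MeasurableSpace α]
    [MeasurableSpace β] (μ : Measure α) (ν : Measure β) [SFinite μ] [SFinite ν]
    (f : α × β → ℝ≥0∞) :
    ∫⁻ p, f p ∂(μ.prod ν) ≤ ∫⁻ y, ∫⁻ x, f (x, y) ∂μ ∂ν := by
  obtain ⟨g, hg, hgf, hfg⟩ := exists_measurable_le_lintegral_eq (μ.prod ν) f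
  rw [hfg, lintegral_prod_symm' g hg]
  exact lintegral_mono fun y => lintegral_mono fun x => hgf (x, y)

section LintegralApprox

variable {X : Type*} [TopologicalSpace X] [MeasurableSpace X]

theorem exists_pairwiseDisjoint_isCompact_sum_lt_lintegral (μ : Measure X) [IsFiniteMeasure μ]
    [μ.InnerRegular] (f : X → ℝ≥0∞) {c : ℝ≥0∞} (hc : c < ∫⁻ x, f x ∂μ) :
    ∃ (s : Finset ℝ≥0) (K : ℝ≥0 → Set X) (d : ℝ≥0 → ℝ≥0∞),
      (∀ r ∈ s, IsCompact (K r)) ∧ (s : Set ℝ≥0).PairwiseDisjoint K ∧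
      (∀ r ∈ s, ∀ x ∈ K r, d r < f x) ∧ c < ∑ r ∈ s, d r * μ (K r) := by
  obtain ⟨φ, hφf, hcφ⟩ : ∃ φ : SimpleFunc X ℝ≥0, (∀ x, (φ x : ℝ≥0∞) ≤ f x) ∧
      c < ∑ r ∈ φ.range, (r : ℝ≥0∞) * μ (φ ⁻¹' {r}) := by
    simpa only [lintegral_eq_nnreal, lt_iSup_iff, SimpleFunc.map_lintegral, exists_prop]
      using hc
  set s : Finset ℝ≥0 := φ.range.filter fun r => (r : ℝ≥0∞) ≠ 0 ∧ μ (φ ⁻¹' {r}) ≠ 0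
  set S : ℝ≥0∞ := ∑ r ∈ s, (r : ℝ≥0∞) * μ (φ ⁻¹' {r})
  have hS : S ≠ ⊤ := by simp [S, ENNReal.mul_eq_top]
  have hcS : c < S :=
    hcφ.trans_eq (Finset.sum_filter_of_ne fun r _ hr => mul_ne_zero_iff.1 hr).symm
  obtain ⟨θ, hθ, hcθ⟩ := ENNReal.exists_lt_one_lt_mul hcS hS
  obtain ⟨τ, hτ, hcτ⟩ := ENNReal.exists_lt_one_lt_mul hcθ
    (ENNReal.mul_ne_top (hθ.trans ENNReal.one_lt_top).ne hS)
  have hK : ∀ r ∈ s, ∃ K ⊆ φ ⁻¹' {r}, IsCompact K ∧ τ * μ (φ ⁻¹' {r}) < μ K := by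
    intro r hr
    refine Measure.InnerRegular.innerRegular (φ.measurableSet_fiber r) _ ?_
    exact (ENNReal.mul_lt_mul_left (Finset.mem_filter.1 hr).2.2 (measure_ne_top _ _) hτ).trans_eq
      (one_mul _)
  choose! K hKφ hKc hKμ using hK
  refine ⟨s, K, fun r => θ * r, hKc, ?_, ?_, ?_⟩
  · intro r hr r' hr' hrr'
    exact Set.disjoint_left.2 fun x hx hx' => hrr' ((hKφ r hr hx).symm.trans (hKφ r' hr' hx'))
  · intro r hr x hx
    calc θ * r < 1 * r := ENNReal.mul_lt_mul_left (Finset.mem_filter.1 hr).2.1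
            ENNReal.coe_ne_top hθ
      _ = φ x := by rw [one_mul, hKφ r hr hx]
      _ ≤ f x := hφf x
  · calc c < τ * (θ * S) := hcτ
      _ = ∑ r ∈ s, θ * r * (τ * μ (φ ⁻¹' {r})) := by
        simp only [S, Finset.mul_sum]
        exact Finset.sum_congr rfl fun r _ => by ring
      _ ≤ ∑ r ∈ s, θ * r * μ (K r) :=
        Finset.sum_le_sum fun r hr => mul_le_mul_right (hKμ r hr).le _

variable {Y : Type*} [TopologicalSpace Y] [T2Space X] [OpensMeasurableSpace X]
  {k : X → Y → ℝ≥0∞}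

theorem exists_measurable_lt_lintegral_eventually_le
    (hk : LowerSemicontinuous fun p : X × Y => k p.1 p.2) (μ : Measure X) [IsFiniteMeasure μ]
    [μ.InnerRegular] {y : Y} {e : ℝ≥0∞} (he : e < ∫⁻ x, k x y ∂μ) :
    ∃ h : X → ℝ≥0∞, Measurable h ∧ e < ∫⁻ x, h x ∂μ ∧ ∀ᶠ y' in 𝓝 y, ∀ x, h x ≤ k x y' := by
  obtain ⟨s, K, d, hKc, hKd, hdk, hsum⟩ :=
    exists_pairwiseDisjoint_isCompact_sum_lt_lintegral μ (fun x => k x y) he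
  have hKm : ∀ r ∈ s, MeasurableSet (K r) := fun r hr => (hKc r hr).isClosed.measurableSet
  refine ⟨fun x => ∑ r ∈ s, (K r).indicator (fun _ => d r) x,
    Finset.measurable_sum _ fun r hr => measurable_const.indicator (hKm r hr),
    hsum.trans_eq (lintegral_finset_sum_indicator_const hKm d).symm, ?_⟩
  have hk' : LowerSemicontinuous fun q : Y × X => k q.2 q.1 := hk.comp continuous_swap
  -- the tube lemma around each `K r × {y}`, inside the open set where `d r < k`
  have htube : ∀ᶠ y' in 𝓝 y, ∀ r ∈ s, ∀ x ∈ K r, d r < k x y' :=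
    (Filter.eventually_all_finset s).2 fun r hr =>
      (hKc r hr).eventually_forall_of_forall_eventually fun x hx => hk' (y, x) _ (hdk r hr x hx)
  exact htube.mono fun y' hy' x =>
    Finset.sum_indicator_le_of_pairwiseDisjoint hKd (fun r hr x hx => (hy' r hr x hx).le) x

variable [MeasurableSpace Y] [OpensMeasurableSpace Y]

theorem IsCompact.exists_measurable_le_forall_le_lintegral
    (hk : LowerSemicontinuous fun p : X × Y => k p.1 p.2) (μ : Measure X) [IsFiniteMeasure μ]
    [μ.InnerRegular] {L : Set Y} (hL : IsCompact L) {e : ℝ≥0∞}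
    (he : ∀ y ∈ L, e < ∫⁻ x, k x y ∂μ) :
    ∃ g : X × Y → ℝ≥0∞, Measurable g ∧ (∀ p, g p ≤ k p.1 p.2) ∧
      ∀ y ∈ L, e ≤ ∫⁻ x, g (x, y) ∂μ := by
  choose! h hm hlt hev using fun y hy => exists_measurable_lt_lintegral_eventually_le hk μ (he y hy)
  set V : Y → Set Y := fun z => interior {y' | ∀ x, h z x ≤ k x y'}
  obtain ⟨t, htL, hLt⟩ := hL.elim_nhds_subcover V fun y hy => interior_mem_nhds.2 (hev y hy)
  set g : Y → X × Y → ℝ≥0∞ := fun z => (Prod.snd ⁻¹' V z).indicator fun p => h z p.1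
  refine ⟨fun p => ⨆ z ∈ t, g z p, ?_, ?_, ?_⟩
  · exact Measurable.biSup _ t.countable_toSet fun z hz =>
      ((hm z (htL z hz)).comp measurable_fst).indicator
        (measurable_snd isOpen_interior.measurableSet)
  · exact fun p => iSup₂_le fun z _ =>
      Set.indicator_apply_le' (fun hp => interior_subset hp p.1) fun _ => zero_le
  · intro y hy
    obtain ⟨z, hzt, hyz⟩ := Set.mem_iUnion₂.1 (hLt hy)
    refine (hlt z (htL z hzt)).le.trans (lintegral_mono fun x => ?_)
    refine le_iSup₂_of_le (f := fun z _ => g z (x, y)) z hzt ?_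
    simp only [g, Set.indicator_of_mem (show (x, y) ∈ Prod.snd ⁻¹' V z from hyz), le_refl]

variable [T2Space Y]

theorem lintegral_lintegral_le_lintegral_prod
    (hk : LowerSemicontinuous fun p : X × Y => k p.1 p.2) (μ : Measure X) (ν : Measure Y)
    [IsFiniteMeasure μ] [μ.InnerRegular] [IsFiniteMeasure ν] [ν.InnerRegular] :
    ∫⁻ y, ∫⁻ x, k x y ∂μ ∂ν ≤ ∫⁻ p, k p.1 p.2 ∂(μ.prod ν) := by
  refine le_of_forall_lt fun c hc => ?_
  obtain ⟨s, L, e, hLc, hLd, heL, hc⟩ := exists_pairwiseDisjoint_isCompact_sum_lt_lintegral ν _ hc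
  choose! g hgm hgk hge using fun r hr =>
    (hLc r hr).exists_measurable_le_forall_le_lintegral hk μ (heL r hr)
  calc c < ∑ r ∈ s, e r * ν (L r) := hc
    _ = ∫⁻ y, ∑ r ∈ s, (L r).indicator (fun _ => e r) y ∂ν :=
      (lintegral_finset_sum_indicator_const (fun r hr => (hLc r hr).isClosed.measurableSet) e).symm
    _ ≤ ∫⁻ y, ∫⁻ x, ⨆ r ∈ s, g r (x, y) ∂μ ∂ν := lintegral_mono fun y =>
      Finset.sum_indicator_le_of_pairwiseDisjoint hLd (fun r hr y hy => (hge r hr y hy).trans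
        (lintegral_mono fun x => le_iSup₂ (f := fun r _ => g r (x, y)) r hr)) y
    _ = ∫⁻ p, ⨆ r ∈ s, g r p ∂(μ.prod ν) :=
      (lintegral_prod_symm' _ (Measurable.biSup _ s.countable_toSet hgm)).symm
    _ ≤ ∫⁻ p, k p.1 p.2 ∂(μ.prod ν) := lintegral_mono fun p => iSup₂_le fun r hr => hgk r hr p

theorem energy_eq_lintegral_pot (hk : LowerSemicontinuous fun p : X × Y => k p.1 p.2)
    (μ : Measure X) (ν : Measure Y) [IsFiniteMeasure μ] [μ.InnerRegular] [IsFiniteMeasure ν]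
    [ν.InnerRegular] :
    energy k μ ν = ∫⁻ y, pot k μ y ∂ν :=
  le_antisymm (lintegral_prod_le_lintegral_lintegral μ ν _)
    (lintegral_lintegral_le_lintegral_prod hk μ ν)

end LintegralApprox

theorem energy_comm {X : Type*} [MeasurableSpace X] {k : X → X → ℝ≥0∞}
    (hsym : ∀ x y, k x y = k y x) (μ ν : Measure X) [SFinite μ] [SFinite ν] :
    energy k μ ν = energy k ν μ := by
  rw [energy, energy, ← lintegral_prod_swap]
  simp only [Prod.fst_swap, Prod.snd_swap, hsym]

section MM

variable {X : Type*} [TopologicalSpace X] [MeasurableSpace X] [OpensMeasurableSpace X]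
  [T2Space X] {k : X → X → ℝ≥0∞} {H L : Set X} {μ ν : Measure X}

theorem energy_eq_lintegral_pot_of_mem_MM (hk : LowerSemicontinuous fun p : X × X => k p.1 p.2)
    (hμ : μ ∈ MM H) (hν : ν ∈ MM L) :
    energy k μ ν = ∫⁻ y, pot k μ y ∂ν := by
  obtain ⟨_, -, _, -⟩ := hμ
  obtain ⟨_, -, _, -⟩ := hν
  exact energy_eq_lintegral_pot hk μ ν

theorem lintegral_pot_comm_of_mem_MM (hk : LowerSemicontinuous fun p : X × X => k p.1 p.2)
    (hsym : ∀ x y, k x y = k y x) (hμ : μ ∈ MM H) (hν : ν ∈ MM L) :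
    ∫⁻ y, pot k μ y ∂ν = ∫⁻ y, pot k ν y ∂μ := by
  have := hμ.1
  have := hν.1
  rw [← energy_eq_lintegral_pot_of_mem_MM hk hμ hν, ← energy_eq_lintegral_pot_of_mem_MM hk hν hμ,
    energy_comm hsym]

end MM

theorem statement3_general {X : Type*} [TopologicalSpace X] [MeasurableSpace X] [BorelSpace X]
    [T2Space X]
    (k : X → X → ℝ≥0∞) (hk : LowerSemicontinuous fun p : X × X => k p.1 p.2)
    (hsym : ∀ x y, k x y = k y x)
    (H L : Set X)
    (RH SH RL SL : Set (Measure X))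
    (hRH : RH ⊆ MM H) (hSH : SH ⊆ MM H) (hRL : RL ⊆ MM L) (hSL : SL ⊆ MM L)
    (h1 : ∀ μ ∈ MM H, (⨅ ν ∈ SL, ∫⁻ y, pot k μ y ∂ν) ≤ ⨅ ν ∈ RL, ∫⁻ y, pot k μ y ∂ν)
    (h2 : ∀ μ ∈ MM L, (⨆ ν ∈ RH, ∫⁻ y, pot k μ y ∂ν) ≤ ⨆ ν ∈ SH, ∫⁻ y, pot k μ y ∂ν) :
    qlow k RH SL ≤ qup k RL SH := by
  unfold qlow qup
  refine iSup₂_le fun μ hμ => le_iInf₂ fun σ hσ => ?_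
  calc ⨅ ν ∈ SL, energy k μ ν = ⨅ ν ∈ SL, ∫⁻ y, pot k μ y ∂ν :=
        biInf_congr fun ν hν => energy_eq_lintegral_pot_of_mem_MM hk (hRH hμ) (hSL hν)
    _ ≤ ⨅ ν ∈ RL, ∫⁻ y, pot k μ y ∂ν := h1 μ (hRH hμ)
    _ ≤ ∫⁻ y, pot k μ y ∂σ := iInf₂_le σ hσ
    _ = ∫⁻ y, pot k σ y ∂μ := lintegral_pot_comm_of_mem_MM hk hsym (hRH hμ) (hRL hσ)
    _ ≤ ⨆ ν ∈ RH, ∫⁻ y, pot k σ y ∂ν := le_iSup₂ (f := fun ν _ => ∫⁻ y, pot k σ y ∂ν) μ hμ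
    _ ≤ ⨆ ν ∈ SH, ∫⁻ y, pot k σ y ∂ν := h2 σ (hRL hσ)
    _ = ⨆ ν ∈ SH, energy k σ ν :=
        biSup_congr fun ν hν => (energy_eq_lintegral_pot_of_mem_MM hk (hRL hσ) (hSH hν)).symm

/-- Lemma 2: under the comparison hypotheses on the potentials,
`q̲(R(H), S̃(L)) ≤ q(R̃(L), S(H))`. -/
theorem statement3 {X : Type*} [TopologicalSpace X] [MeasurableSpace X] [BorelSpace X]
    [LocallyCompactSpace X] [T2Space X]
    (k : X → X → ℝ≥0∞) (hk : LowerSemicontinuous fun p : X × X => k p.1 p.2)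
    (hsym : ∀ x y, k x y = k y x)
    (H L : Set X)
    (RH SH RL SL : Set (Measure X))
    (hRH : RH ⊆ MM H) (hSH : SH ⊆ MM H) (hRL : RL ⊆ MM L) (hSL : SL ⊆ MM L)
    (h1 : ∀ μ ∈ MM H, (⨅ ν ∈ SL, ∫⁻ y, pot k μ y ∂ν) ≤ ⨅ ν ∈ RL, ∫⁻ y, pot k μ y ∂ν)
    (h2 : ∀ μ ∈ MM L, (⨆ ν ∈ RH, ∫⁻ y, pot k μ y ∂ν) ≤ ⨆ ν ∈ SH, ∫⁻ y, pot k μ y ∂ν) :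
    qlow k RH SL ≤ qup k RL SH :=
  statement3_general k hk hsym H L RH SH RL SL hRH hSH hRL hSL h1 h2

end
end

section
/- Let H ⊆ X and L ⊆ Y be arbitrary, and k a positive lower semicontinuous symmetric kernel. Suppose that for every μ ∈ R(H) and every ε > 0 there is a compact set K(ε) ⊆ H and a measure μ_{K(ε)} ∈ R(K(ε)) such that μ_{K(ε)} ≤ (1+ε) μ|_{K(ε)}. Then q(R(H), S(L)) = inf over compact K ⊆ H of q(R(K), S(L)). -/
/-!
The energy `E(μ, ν)` is monotone and positively homogeneous in `μ`, so a competitor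
`μ' ≤ (1 + ε) μ|_K` concentrated on a compact `K ⊆ H` has
`sup_ν E(μ', ν) ≤ (1 + ε) sup_ν E(μ, ν)`; letting `ε → 0` gives the nontrivial
inequality.
-/

open MeasureTheory Topology Filter ENNReal

noncomputable section

theorem ENNReal.le_of_forall_pos_le_one_add_mul {a b : ℝ≥0∞}
    (h : ∀ ε : ℝ≥0∞, 0 < ε → a ≤ (1 + ε) * b) : a ≤ b := by
  have hlim : Tendsto (fun ε : ℝ≥0∞ => (1 + ε) * b) (𝓝[>] 0) (𝓝 b) := by
    have h1 : Tendsto (fun ε : ℝ≥0∞ => 1 + ε) (𝓝[>] 0) (𝓝 1) := by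
      simpa using ((tendsto_const_nhds (x := (1 : ℝ≥0∞))).add
        (tendsto_id (x := 𝓝 (0 : ℝ≥0∞)))).mono_left nhdsWithin_le_nhds
    simpa using ENNReal.Tendsto.mul_const h1 (Or.inl one_ne_zero)
  exact ge_of_tendsto hlim (eventually_nhdsWithin_of_forall h)

theorem energy_le_mul_of_le_smul {X Y : Type*} [MeasurableSpace X] [MeasurableSpace Y]
    (k : X → Y → ℝ≥0∞) {μ μ' : Measure X} {ν : Measure Y} [SFinite ν] {c : ℝ≥0∞}
    (h : μ' ≤ c • μ) : energy k μ' ν ≤ c * energy k μ ν :=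
  calc energy k μ' ν ≤ ∫⁻ p : X × Y, k p.1 p.2 ∂((c • μ).prod ν) :=
        lintegral_mono' (Measure.prod_mono h le_rfl) le_rfl
    _ = c * energy k μ ν := by
        rw [Measure.prod_smul_left, lintegral_smul_measure, energy, smul_eq_mul]

theorem qup_le_mul_of_le_smul {X Y : Type*} [MeasurableSpace X] [MeasurableSpace Y]
    (k : X → Y → ℝ≥0∞) {R : Set (Measure X)} {S : Set (Measure Y)}
    (hS : ∀ ν ∈ S, SFinite ν) {μ μ' : Measure X} (hμ' : μ' ∈ R) {c : ℝ≥0∞}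
    (h : μ' ≤ c • μ) : qup k R S ≤ c * ⨆ ν ∈ S, energy k μ ν := by
  refine iInf₂_le_of_le μ' hμ' (iSup₂_le fun ν hν => ?_)
  have : SFinite ν := hS ν hν
  exact (energy_le_mul_of_le_smul k h).trans
    (mul_le_mul_right (le_iSup₂ (f := fun ν _ => energy k μ ν) ν hν) c)

theorem statement7_general {X : Type*} [TopologicalSpace X] [MeasurableSpace X]
    (k : X → X → ℝ≥0∞)
    (H L : Set X)
    (R S : Set (Measure X)) (hS : S ⊆ MM L)
    (hyp : ∀ μ ∈ R, ∀ ε : ℝ≥0∞, 0 < ε → ∃ K : Set X, IsCompact K ∧ K ⊆ H ∧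
      ∃ μ' ∈ R, Concentrated μ' K ∧ μ' ≤ (1 + ε) • μ.restrict K) :
    qup k R S = ⨅ (K : Set X) (_ : IsCompact K) (_ : K ⊆ H),
      qup k {μ ∈ R | Concentrated μ K} S := by
  have hS_sFinite : ∀ ν ∈ S, SFinite ν := fun ν hν => have := (hS hν).1; inferInstance
  refine le_antisymm (le_iInf₂ fun K _ => le_iInf fun _ => biInf_mono fun μ hμ => hμ.1) ?_
  refine le_iInf₂ fun μ hμ => ENNReal.le_of_forall_pos_le_one_add_mul fun ε hε => ?_
  obtain ⟨K, hK, hKH, μ', hμ'R, hμ'K, hμ'le⟩ := hyp μ hμ ε hε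
  calc _ ≤ qup k {μ ∈ R | Concentrated μ K} S := iInf₂_le_of_le K hK (iInf_le _ hKH)
    _ ≤ (1 + ε) * ⨆ ν ∈ S, energy k μ ν :=
      qup_le_mul_of_le_smul k hS_sFinite (by exact ⟨hμ'R, hμ'K⟩)
        (hμ'le.trans (smul_le_smul_left _ Measure.restrict_le_self))

/-- Lemma 4: if every `μ ∈ R(H)` can be `(1+ε)`-approximated by a member of
the family concentrated on a compact subset of `H`, then
`q(R(H), S(L)) = inf_{K ⊂⊂ H} q(R(K), S(L))`. -/
theorem statement7 {X : Type*} [TopologicalSpace X] [MeasurableSpace X] [BorelSpace X]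
    [LocallyCompactSpace X] [T2Space X]
    (k : X → X → ℝ≥0∞) (hk : LowerSemicontinuous fun p : X × X => k p.1 p.2)
    (hsym : ∀ x y, k x y = k y x)
    (H L : Set X)
    (R S : Set (Measure X)) (hR : R ⊆ MM H) (hS : S ⊆ MM L)
    (hyp : ∀ μ ∈ R, ∀ ε : ℝ≥0∞, 0 < ε → ∃ K : Set X, IsCompact K ∧ K ⊆ H ∧
      ∃ μ' ∈ R, Concentrated μ' K ∧ μ' ≤ (1 + ε) • μ.restrict K) :
    qup k R S = ⨅ (K : Set X) (_ : IsCompact K) (_ : K ⊆ H),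
      qup k {μ ∈ R | Concentrated μ K} S :=
  statement7_general k H L R S hS hyp

end
end

section
/- Let H ⊆ X be arbitrary and let S(L) ⊆ M(L) be compact in the vague topology. Suppose that for every measure μ ∈ R(H) there is a net of measures {μ_K}, indexed by a directed subfamily of the compact subsets of H, with μ_K ∈ R(K) for each index K, converging to μ in the vague topology. Then q̲(R(H), S(L)) = sup over compact K ⊆ H of q̲(R(K), S(L)). -/
/-!
On finite inner regular measures the energy `E(μ, ν) = ∫ k d(μ ⊗ ν)` is jointly lower
semicontinuous for the vague topology. The product `μ ⊗ ν` is again inner regular (closed/open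
approximation passes from rectangles to the product σ-algebra, and tightness turns closed sets
into compact ones), so `∫ k d(μ ⊗ ν)` is the supremum of the integrals of finite sums
`∑ fᵢ(x) gᵢ(y) ≤ k` with `fᵢ, gᵢ ≥ 0` continuous with compact support; such sums are built level
by level on the open sets `{k > c}` from a partition of unity in `x` and Urysohn functions in `y`.
Their integrals `∑ (∫ fᵢ dμ)(∫ gᵢ dν)` are vaguely continuous in `(μ, ν)`. By compactness of
`S(L)` the function `μ ↦ inf_{ν ∈ S(L)} E(μ, ν)` is then lower semicontinuous, which bounds its
value at `μ` by its values along the net `μ_K`; the reverse inequality is monotonicity of `q̲`.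
-/

open MeasureTheory Topology Filter ENNReal

noncomputable section

open scoped NNReal

namespace MeasureTheory.Measure

open Function

section ClosedOpenApproximation

variable {α : Type*} [TopologicalSpace α] [MeasurableSpace α] {ρ : Measure α}

-- Measurability of `F` and `G` is part of the definition: for `μ.prod ν` the σ-algebra is the
-- product one, which may be strictly smaller than the Borel σ-algebra of `X × Y`.
def IsClosedOpenApproximable (ρ : Measure α) (A : Set α) : Prop :=
  ∀ ε, 0 < ε → ∃ F G, IsClosed F ∧ MeasurableSet F ∧ IsOpen G ∧ MeasurableSet G ∧
    F ⊆ A ∧ A ⊆ G ∧ ρ (G \ F) < ε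

theorem IsClosedOpenApproximable.compl {A : Set α} (h : IsClosedOpenApproximable ρ A) :
    IsClosedOpenApproximable ρ Aᶜ := by
  intro ε hε
  obtain ⟨F, G, hFc, hFm, hGo, hGm, hFA, hAG, hρ⟩ := h ε hε
  refine ⟨Gᶜ, Fᶜ, hGo.isClosed_compl, hGm.compl, hFc.isOpen_compl, hFm.compl,
    Set.compl_subset_compl.2 hAG, Set.compl_subset_compl.2 hFA, ?_⟩
  rwa [compl_sdiff_compl]

theorem IsClosedOpenApproximable.iUnion [IsFiniteMeasure ρ] {A : ℕ → Set α}
    (hdisj : Pairwise (Disjoint on A)) (hA : ∀ n, MeasurableSet (A n))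
    (h : ∀ n, IsClosedOpenApproximable ρ (A n)) :
    IsClosedOpenApproximable ρ (⋃ n, A n) := by
  intro ε hε
  have hε2 : 0 < ε / 2 := ENNReal.half_pos hε.ne'
  obtain ⟨δ, hδpos, hδsum⟩ := ENNReal.exists_pos_sum_of_countable' hε2.ne' ℕ
  choose F G hFc hFm hGo hGm hFA hAG hρ using fun n => h n (δ n) (hδpos n)
  obtain ⟨N, hN⟩ : ∃ N, ρ (⋃ n ∈ Set.Ici N, A n) < ε / 2 :=
    ((tendsto_order.1 (tendsto_measure_biUnion_Ici_zero_of_pairwise_disjoint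
      (fun n => (hA n).nullMeasurableSet) hdisj)).2 _ hε2).exists
  refine ⟨⋃ n ∈ Finset.range N, F n, ⋃ n, G n, isClosed_biUnion_finset fun n _ => hFc n,
    Finset.measurableSet_biUnion _ fun n _ => hFm n, isOpen_iUnion hGo, .iUnion hGm,
    Set.iUnion₂_subset fun n _ => (hFA n).trans (Set.subset_iUnion A n), Set.iUnion_mono hAG, ?_⟩
  have hsub : (⋃ n, G n) \ ⋃ n ∈ Finset.range N, F n ⊆
      (⋃ n, G n \ F n) ∪ ⋃ n ∈ Set.Ici N, A n := by
    rintro p ⟨hpG, hpF⟩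
    obtain ⟨m, hm⟩ := Set.mem_iUnion.1 hpG
    by_cases hpm : p ∈ F m
    · have hmN : N ≤ m := by
        by_contra! hmN
        exact hpF (Set.mem_biUnion (Finset.mem_coe.2 (Finset.mem_range.2 hmN)) hpm)
      exact Or.inr (Set.mem_biUnion hmN (hFA m hpm))
    · exact Or.inl (Set.mem_iUnion.2 ⟨m, hm, hpm⟩)
  calc ρ ((⋃ n, G n) \ ⋃ n ∈ Finset.range N, F n)
      ≤ ∑' n, ρ (G n \ F n) + ρ (⋃ n ∈ Set.Ici N, A n) :=
        (measure_mono hsub).trans ((measure_union_le _ _).trans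
          (add_le_add_left (measure_iUnion_le _) _))
    _ < ε / 2 + ε / 2 :=
        ENNReal.add_lt_add ((ENNReal.tsum_le_tsum fun n => (hρ n).le).trans_lt hδsum) hN
    _ = ε := ENNReal.add_halves ε

theorem isClosedOpenApproximable_of_generateFrom [IsFiniteMeasure ρ] {C : Set (Set α)}
    (hgen : ‹MeasurableSpace α› = MeasurableSpace.generateFrom C) (hC : IsPiSystem C)
    (hCapprox : ∀ A ∈ C, IsClosedOpenApproximable ρ A) {A : Set α} (hA : MeasurableSet A) :
    IsClosedOpenApproximable ρ A := by
  induction A, hA using MeasurableSpace.induction_on_inter hgen hC with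
  | empty =>
    exact fun ε hε => ⟨∅, ∅, isClosed_empty, .empty, isOpen_empty, .empty, subset_rfl, subset_rfl,
      by simpa using hε⟩
  | basic A hA => exact hCapprox A hA
  | compl A _ h => exact h.compl
  | iUnion A hdisj hAm h => exact IsClosedOpenApproximable.iUnion hdisj hAm h

theorem _root_.MeasurableSet.isClosedOpenApproximable [OpensMeasurableSpace α] [IsFiniteMeasure ρ]
    [ρ.WeaklyRegular] {A : Set α} (hA : MeasurableSet A) : IsClosedOpenApproximable ρ A := by
  intro ε hε
  have hε2 : ε / 2 ≠ 0 := (ENNReal.half_pos hε.ne').ne'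
  obtain ⟨F, hFA, hFc, hF⟩ := hA.exists_isClosed_sdiff_lt (measure_ne_top ρ A) hε2
  obtain ⟨G, hAG, hGo, -, hG⟩ := hA.exists_isOpen_sdiff_lt (measure_ne_top ρ A) hε2
  refine ⟨F, G, hFc, hFc.measurableSet, hGo, hGo.measurableSet, hFA, hAG, ?_⟩
  calc ρ (G \ F) ≤ ρ (G \ A) + ρ (A \ F) :=
        (measure_mono (sdiff_triangle G A F)).trans (measure_union_le _ _)
    _ < ε / 2 + ε / 2 := ENNReal.add_lt_add hG hF
    _ = ε := ENNReal.add_halves ε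

end ClosedOpenApproximation

section Prod

variable {X Y : Type*} [TopologicalSpace X] [MeasurableSpace X] [TopologicalSpace Y]
  [MeasurableSpace Y] {μ : Measure X} {ν : Measure Y}

theorem IsClosedOpenApproximable.prod [IsFiniteMeasure μ] [IsFiniteMeasure ν] {S : Set X}
    {T : Set Y} (hS : IsClosedOpenApproximable μ S) (hT : IsClosedOpenApproximable ν T) :
    IsClosedOpenApproximable (μ.prod ν) (S ×ˢ T) := by
  intro ε hε
  obtain ⟨δ, hδ, hδε⟩ :=
    ENNReal.exists_nnreal_pos_mul_lt (a := μ Set.univ + ν Set.univ) (by finiteness) hε.ne'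
  obtain ⟨F, G, hFc, hFm, hGo, hGm, hFS, hSG, hμ⟩ := hS δ (by exact_mod_cast hδ)
  obtain ⟨F', G', hF'c, hF'm, hG'o, hG'm, hF'T, hTG', hν⟩ := hT δ (by exact_mod_cast hδ)
  refine ⟨F ×ˢ F', G ×ˢ G', hFc.prod hF'c, hFm.prod hF'm, hGo.prod hG'o, hGm.prod hG'm,
    Set.prod_mono hFS hF'T, Set.prod_mono hSG hTG', ?_⟩
  calc (μ.prod ν) (G ×ˢ G' \ F ×ˢ F')
      ≤ μ G * ν (G' \ F') + μ (G \ F) * ν G' := by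
        rw [Set.prod_sdiff_prod, ← Measure.prod_prod, ← Measure.prod_prod]
        exact measure_union_le _ _
    _ ≤ μ Set.univ * δ + δ * ν Set.univ := by
        exact add_le_add (mul_le_mul' (measure_mono (Set.subset_univ _)) hν.le)
          (mul_le_mul' hμ.le (measure_mono (Set.subset_univ _)))
    _ = δ * (μ Set.univ + ν Set.univ) := by ring
    _ < ε := hδε

theorem isClosedOpenApproximable_prod [OpensMeasurableSpace X] [OpensMeasurableSpace Y]
    [IsFiniteMeasure μ] [IsFiniteMeasure ν] [μ.WeaklyRegular] [ν.WeaklyRegular]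
    {A : Set (X × Y)} (hA : MeasurableSet A) : IsClosedOpenApproximable (μ.prod ν) A :=
  isClosedOpenApproximable_of_generateFrom generateFrom_prod.symm isPiSystem_prod
    (by
      rintro _ ⟨S, hS, T, hT, rfl⟩
      exact hS.isClosedOpenApproximable.prod hT.isClosedOpenApproximable) hA

instance innerRegular_prod [T2Space X] [T2Space Y] [BorelSpace X] [BorelSpace Y]
    [IsFiniteMeasure μ] [IsFiniteMeasure ν] [μ.InnerRegular] [ν.InnerRegular] :
    (μ.prod ν).InnerRegular := by
  have htight : IsTightMeasureSet {μ.prod ν} := by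
    have := μ.smul_finite (measure_ne_top ν Set.univ)
    have := ν.smul_finite (measure_ne_top μ Set.univ)
    refine .prodMk ?_ ?_ <;>
      simp only [Set.image_singleton, Measure.fst, Measure.snd, map_fst_prod, map_snd_prod] <;>
      exact isTightMeasureSet_singleton_of_innerRegular
  refine ⟨(innerRegularWRT_of_exists_compl_lt (q := fun s => IsClosed s ∧ MeasurableSet s)
    (fun K F hK hF => hK.inter_right hF.1) fun ε hε => ?_).trans fun A hA r hr => ?_⟩
  · obtain ⟨δ, hδ, hδε⟩ := exists_between hε
    obtain ⟨K, hK, hKδ⟩ := isTightMeasureSet_iff_exists_isCompact_measure_compl_le.1 htight δ hδ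
    exact ⟨K, hK, (hKδ _ rfl).trans_lt hδε⟩
  · obtain ⟨F, G, hFc, hFm, -, -, hFA, hAG, hF⟩ :=
      isClosedOpenApproximable_prod (μ := μ) (ν := ν) hA (μ.prod ν A - r) (tsub_pos_of_lt hr)
    refine ⟨F, hFA, ⟨hFc, hFm⟩, lt_of_tsub_lt_tsub_left (a := μ.prod ν A) ?_⟩
    calc μ.prod ν A - μ.prod ν F ≤ μ.prod ν (A \ F) := le_measure_sdiff
      _ ≤ μ.prod ν (G \ F) := measure_mono (Set.sdiff_subset_sdiff_left hAG)
      _ < μ.prod ν A - r := hF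

end Prod

end MeasureTheory.Measure

namespace ENNReal

theorem sum_range_indicator_Ioi_eq {η a : ℝ≥0∞} {M : ℕ} (h : M * η < a) :
    ∑ m ∈ Finset.range M, (Set.Ioi ((m + 1) * η)).indicator (fun _ => η) a = M * η := by
  rw [Finset.sum_congr rfl fun m hm => Set.indicator_of_mem (?_ : a ∈ _) _, Finset.sum_const,
    Finset.card_range, nsmul_eq_mul]
  refine lt_of_le_of_lt (mul_le_mul_left ?_ η) h
  exact_mod_cast Finset.mem_range.1 hm

theorem sum_range_indicator_Ioi_le (η a : ℝ≥0∞) (M : ℕ) :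
    ∑ m ∈ Finset.range M, (Set.Ioi ((m + 1) * η)).indicator (fun _ => η) a ≤ a := by
  induction M with
  | zero => simp
  | succ M ih =>
    by_cases hM : ((M : ℝ≥0∞) + 1) * η < a
    · rw [sum_range_indicator_Ioi_eq (by exact_mod_cast hM)]
      exact_mod_cast hM.le
    · rwa [Finset.sum_range_succ, Set.indicator_of_notMem (show a ∉ Set.Ioi _ from hM), add_zero]

theorem le_add_sum_range_indicator_Ioi {η a : ℝ≥0∞} {M : ℕ} (ha : a ≤ (M + 1) * η) :
    a ≤ η + ∑ m ∈ Finset.range M, (Set.Ioi ((m + 1) * η)).indicator (fun _ => η) a := by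
  induction M with
  | zero => simpa using ha
  | succ M ih =>
    by_cases hM : a ≤ (M + 1) * η
    · refine (ih hM).trans ?_
      gcongr
      exact M.le_succ
    · rw [sum_range_indicator_Ioi_eq (by exact_mod_cast not_le.1 hM)]
      calc a ≤ (↑(M + 1) + 1) * η := ha
        _ = η + ↑(M + 1) * η := by ring

theorem le_add_tsum_indicator_Ioi {η : ℝ≥0∞} (hη : η ≠ 0) (a : ℝ≥0∞) :
    a ≤ η + ∑' m : ℕ, (Set.Ioi ((m + 1) * η)).indicator (fun _ => η) a := by
  refine le_of_forall_lt_imp_le_of_dense fun b hb => ?_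
  obtain ⟨M, hM⟩ := exists_nat_mul_gt hη hb.ne_top
  have hbM : b ≤ (M + 1) * η := hM.le.trans (mul_le_mul_left le_self_add η)
  calc b ≤ η + ∑ m ∈ Finset.range M, (Set.Ioi ((m + 1) * η)).indicator (fun _ => η) b :=
        le_add_sum_range_indicator_Ioi hbM
    _ ≤ η + ∑ m ∈ Finset.range M, (Set.Ioi ((m + 1) * η)).indicator (fun _ => η) a := by
        gcongr with m
        simp only [Set.indicator_apply, Set.mem_Ioi]
        split_ifs with h1 h2
        exacts [le_rfl, absurd (h1.trans hb) h2, bot_le, le_rfl]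
    _ ≤ η + ∑' m : ℕ, (Set.Ioi ((m + 1) * η)).indicator (fun _ => η) a :=
        add_le_add_right (ENNReal.sum_le_tsum _) η

end ENNReal

theorem tendsto_integral_of_tendsto_vague {X : Type*} [TopologicalSpace X] [MeasurableSpace X]
    {ι : Type*} {l : Filter ι} {μi : ι → Measure X} {μ : Measure X}
    (h : Tendsto μi l (@nhds _ (vagueTop X) μ)) {f : X → ℝ} (hf : Continuous f)
    (hfc : HasCompactSupport f) :
    Tendsto (fun i => ∫ x, f x ∂μi i) l (𝓝 (∫ x, f x ∂μ)) := by
  let := vagueTop X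
  exact ((continuous_iff_le_induced.2
    (iInf_le_of_le f (iInf_le_of_le hf (iInf_le _ hfc)))).tendsto μ).comp h

section ProdTestFunctions

variable (X Y : Type*) [TopologicalSpace X] [TopologicalSpace Y]

def prodTestFunctions : Submodule ℝ≥0 (X × Y → ℝ≥0∞) :=
  Submodule.span ℝ≥0 {Ψ | ∃ (f : X → ℝ) (g : Y → ℝ), Continuous f ∧ HasCompactSupport f ∧ 0 ≤ f ∧
    Continuous g ∧ HasCompactSupport g ∧ 0 ≤ g ∧
    Ψ = fun p => ENNReal.ofReal (f p.1) * ENNReal.ofReal (g p.2)}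

variable {X Y} [MeasurableSpace X] [MeasurableSpace Y]

theorem measurable_of_mem_prodTestFunctions [OpensMeasurableSpace X] [OpensMeasurableSpace Y]
    {Ψ : X × Y → ℝ≥0∞} (hΨ : Ψ ∈ prodTestFunctions X Y) : Measurable Ψ := by
  induction hΨ using Submodule.span_induction with
  | mem Ψ hΨ =>
    obtain ⟨f, g, hf, -, -, hg, -, -, rfl⟩ := hΨ
    exact (ENNReal.measurable_ofReal.comp (hf.measurable.comp measurable_fst)).mul
      (ENNReal.measurable_ofReal.comp (hg.measurable.comp measurable_snd))
  | zero => exact measurable_const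
  | add _ _ _ _ h₁ h₂ => exact h₁.add h₂
  | smul c _ _ h => exact h.const_smul c

theorem lintegral_ofReal_mul_ofReal_prod {μ : Measure X} {ν : Measure Y} [IsFiniteMeasure μ]
    [IsFiniteMeasure ν] [OpensMeasurableSpace X] [OpensMeasurableSpace Y] {f : X → ℝ} {g : Y → ℝ}
    (hf : Continuous f) (hfc : HasCompactSupport f) (hf0 : 0 ≤ f)
    (hg : Continuous g) (hgc : HasCompactSupport g) (hg0 : 0 ≤ g) :
    ∫⁻ p, ENNReal.ofReal (f p.1) * ENNReal.ofReal (g p.2) ∂μ.prod ν =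
      ENNReal.ofReal (∫ x, f x ∂μ) * ENNReal.ofReal (∫ y, g y ∂ν) := by
  rw [lintegral_prod_mul (f := fun x => ENNReal.ofReal (f x)) (g := fun y => ENNReal.ofReal (g y))
      hf.measurable.ennreal_ofReal.aemeasurable hg.measurable.ennreal_ofReal.aemeasurable,
    ofReal_integral_eq_lintegral_ofReal (hf.integrable_of_hasCompactSupport hfc)
      (Eventually.of_forall hf0),
    ofReal_integral_eq_lintegral_ofReal (hg.integrable_of_hasCompactSupport hgc)
      (Eventually.of_forall hg0)]

theorem tendsto_lintegral_prod_of_mem_prodTestFunctions [OpensMeasurableSpace X]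
    [OpensMeasurableSpace Y] {Ψ : X × Y → ℝ≥0∞} (hΨ : Ψ ∈ prodTestFunctions X Y)
    {ι : Type*} {l : Filter ι} {μi : ι → Measure X} {νi : ι → Measure Y} {μ : Measure X}
    {ν : Measure Y} [∀ i, IsFiniteMeasure (μi i)] [∀ i, IsFiniteMeasure (νi i)]
    [IsFiniteMeasure μ] [IsFiniteMeasure ν]
    (hμ : Tendsto μi l (@nhds _ (vagueTop X) μ)) (hν : Tendsto νi l (@nhds _ (vagueTop Y) ν)) :
    Tendsto (fun i => ∫⁻ p, Ψ p ∂(μi i).prod (νi i)) l (𝓝 (∫⁻ p, Ψ p ∂μ.prod ν)) := by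
  induction hΨ using Submodule.span_induction with
  | mem Ψ hΨ =>
    obtain ⟨f, g, hf, hfc, hf0, hg, hgc, hg0, rfl⟩ := hΨ
    simp only [lintegral_ofReal_mul_ofReal_prod hf hfc hf0 hg hgc hg0]
    exact ENNReal.Tendsto.mul
      ((ENNReal.continuous_ofReal.tendsto _).comp (tendsto_integral_of_tendsto_vague hμ hf hfc))
      (Or.inr ENNReal.ofReal_ne_top)
      ((ENNReal.continuous_ofReal.tendsto _).comp (tendsto_integral_of_tendsto_vague hν hg hgc))
      (Or.inr ENNReal.ofReal_ne_top)
  | zero => simpa using tendsto_const_nhds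
  | add Ψ₁ Ψ₂ hΨ₁ _ h₁ h₂ =>
    simp only [Pi.add_apply, lintegral_add_left (measurable_of_mem_prodTestFunctions hΨ₁)]
    exact h₁.add h₂
  | smul c Ψ hΨ h =>
    simp only [Pi.smul_apply, ENNReal.smul_def, smul_eq_mul,
      lintegral_const_mul _ (measurable_of_mem_prodTestFunctions hΨ)]
    exact ENNReal.Tendsto.const_mul h (Or.inr ENNReal.coe_ne_top)

end ProdTestFunctions

section Bump

variable {X Y : Type*} [TopologicalSpace X]

theorem PartitionOfUnity.indicator_le_sum_ofReal_mul_le {ι : Type*} [Fintype ι]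
    {F U : Set (X × Y)} (φ : PartitionOfUnity ι X (Prod.fst '' F)) {V : ι → Set X}
    {W : ι → Set Y} (hφV : φ.IsSubordinate V) (hVW : ∀ i, V i ×ˢ W i ⊆ U) {g : ι → Y → ℝ}
    (hg1 : ∀ i, Set.EqOn (g i) 1 (Prod.snd '' (F ∩ Prod.fst ⁻¹' tsupport (φ i))))
    (hg0 : ∀ i, Set.EqOn (g i) 0 (W i)ᶜ) (hgI : ∀ i y, g i y ∈ Set.Icc (0 : ℝ) 1) :
    (F.indicator 1 : X × Y → ℝ≥0∞) ≤
        (fun p => ∑ i, ENNReal.ofReal (φ i p.1) * ENNReal.ofReal (g i p.2)) ∧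
      (fun p => ∑ i, ENNReal.ofReal (φ i p.1) * ENNReal.ofReal (g i p.2)) ≤ U.indicator 1 := by
  have hsum : ∀ p : X × Y, ∑ i, ENNReal.ofReal (φ i p.1) * ENNReal.ofReal (g i p.2) =
      ENNReal.ofReal (∑ i, φ i p.1 * g i p.2) := fun p => by
    rw [ENNReal.ofReal_sum_of_nonneg fun i _ => mul_nonneg (φ.nonneg i _) (hgI i _).1]
    exact Finset.sum_congr rfl fun i _ => (ENNReal.ofReal_mul (φ.nonneg i _)).symm
  refine ⟨fun p => ?_, fun p => ?_⟩ <;> simp only [hsum]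
  · by_cases hpF : p ∈ F
    · have hφg : ∀ i, φ i p.1 * g i p.2 = φ i p.1 := fun i => by
        by_cases hφ : φ i p.1 = 0
        · rw [hφ, zero_mul]
        · rw [hg1 i ⟨p, ⟨hpF, subset_tsupport _ hφ⟩, rfl⟩, Pi.one_apply, mul_one]
      rw [Set.indicator_of_mem hpF, Finset.sum_congr rfl fun i _ => hφg i,
        ← finsum_eq_sum_of_fintype, φ.sum_eq_one ⟨p, hpF, rfl⟩, ENNReal.ofReal_one, Pi.one_apply]
    · rw [Set.indicator_of_notMem hpF]
      exact zero_le
  · by_cases hpU : p ∈ U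
    · rw [Set.indicator_of_mem hpU, Pi.one_apply, ← ENNReal.ofReal_one]
      refine ENNReal.ofReal_le_ofReal ((Finset.sum_le_sum fun i _ =>
        mul_le_of_le_one_right (φ.nonneg i _) (hgI i _).2).trans ?_)
      rw [← finsum_eq_sum_of_fintype]
      exact φ.sum_le_one _
    · have hterm : ∀ i, φ i p.1 * g i p.2 = 0 := fun i => by
        by_contra h
        refine hpU (hVW i ⟨hφV i (subset_tsupport _ (left_ne_zero_of_mul h)), ?_⟩)
        by_contra hpW
        exact right_ne_zero_of_mul h (hg0 i hpW)
      simp [hterm, Set.indicator_of_notMem hpU]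

variable [TopologicalSpace Y]

theorem IsCompact.exists_isOpen_prod_subset_of_fiber [T2Space X] {F U : Set (X × Y)}
    (hF : IsCompact F) (hU : IsOpen U) (hFU : F ⊆ U) (x : X) :
    ∃ V W, IsOpen V ∧ IsOpen W ∧ x ∈ V ∧ V ×ˢ W ⊆ U ∧ F ∩ Prod.fst ⁻¹' V ⊆ Prod.snd ⁻¹' W := by
  set Fx : Set Y := Prod.snd '' (F ∩ Prod.fst ⁻¹' {x})
  have hFx : IsCompact Fx :=
    (hF.inter_right (isClosed_singleton.preimage continuous_fst)).image continuous_snd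
  have hxFx : {x} ×ˢ Fx ⊆ U := by
    rintro ⟨a, _⟩ ⟨rfl, p, ⟨hpF, hpx : p.1 = a⟩, rfl⟩
    rw [← hpx]
    exact hFU hpF
  obtain ⟨V₀, W, hV₀, hW, hxV₀, hFxW, hVWU⟩ :=
    generalized_tube_lemma isCompact_singleton hFx hU hxFx
  set E : Set X := Prod.fst '' (F ∩ Prod.snd ⁻¹' Wᶜ)
  have hE : IsCompact E :=
    (hF.inter_right (hW.isClosed_compl.preimage continuous_snd)).image continuous_fst
  have hxE : x ∉ E := by
    rintro ⟨p, ⟨hpF, hpW⟩, rfl⟩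
    exact hpW (hFxW ⟨p, ⟨hpF, rfl⟩, rfl⟩)
  refine ⟨V₀ ∩ Eᶜ, W, hV₀.inter hE.isClosed.isOpen_compl, hW, ⟨hxV₀ rfl, hxE⟩,
    fun p hp => hVWU ⟨hp.1.1, hp.2⟩, fun p ⟨hpF, hpV⟩ => ?_⟩
  by_contra hpW
  exact hpV.2 ⟨p, ⟨hpF, hpW⟩, rfl⟩

theorem exists_mem_prodTestFunctions_indicator_le [T2Space X] [LocallyCompactSpace X]
    [T2Space Y] [LocallyCompactSpace Y] {F U : Set (X × Y)} (hF : IsCompact F) (hU : IsOpen U)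
    (hFU : F ⊆ U) :
    ∃ Ψ ∈ prodTestFunctions X Y, F.indicator 1 ≤ Ψ ∧ Ψ ≤ U.indicator 1 := by
  choose V W hV hW hxV hVW hFW using hF.exists_isOpen_prod_subset_of_fiber hU hFU
  have hC : IsCompact (Prod.fst '' F) := hF.image continuous_fst
  obtain ⟨t, ht⟩ := hC.elim_finite_subcover V hV fun x _ => Set.mem_iUnion.2 ⟨x, hxV x⟩
  obtain ⟨φ, hφV, hφc⟩ := PartitionOfUnity.exists_isSubordinate_of_locallyFinite_t2space hC
    (fun i : t => V i) (fun i => hV i) (locallyFinite_of_finite _) fun x hx => by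
      obtain ⟨i, hi, hxi⟩ := Set.mem_iUnion₂.1 (ht hx)
      exact Set.mem_iUnion.2 ⟨⟨i, hi⟩, hxi⟩
  -- The part of `F` lying over `tsupport (φ i)` lies in `X × W i` by the choice of `V i`.
  have hg : ∀ i : t, ∃ g : C(Y, ℝ), Set.EqOn g 1 (Prod.snd '' (F ∩ Prod.fst ⁻¹' tsupport (φ i))) ∧
      Set.EqOn g 0 (W i)ᶜ ∧ HasCompactSupport g ∧ ∀ y, g y ∈ Set.Icc (0 : ℝ) 1 := fun i =>
    exists_continuous_one_zero_of_isCompact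
      ((hF.inter_right ((isClosed_tsupport _).preimage continuous_fst)).image continuous_snd)
      (hW i).isClosed_compl <| Set.disjoint_compl_right_iff_subset.2 <| by
        rintro _ ⟨p, ⟨hpF, hpφ⟩, rfl⟩
        exact hFW i ⟨hpF, hφV i hpφ⟩
  choose g hg1 hg0 hgc hgI using hg
  have hmem : ∀ i : t, (fun p : X × Y => ENNReal.ofReal (φ i p.1) * ENNReal.ofReal (g i p.2)) ∈
      prodTestFunctions X Y := fun i => Submodule.subset_span ⟨φ i, g i, (φ i).continuous,
    hφc i, φ.nonneg i, (g i).continuous, hgc i, fun y => (hgI i y).1, rfl⟩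
  refine ⟨_, ?_, φ.indicator_le_sum_ofReal_mul_le hφV (fun i => hVW i) hg1 hg0 hgI⟩
  convert Submodule.sum_mem _ fun i (_ : i ∈ Finset.univ) => hmem i using 1
  ext p
  simp only [Finset.sum_apply]

end Bump

theorem measure_le_lintegral_of_indicator_le {α : Type*} [MeasurableSpace α] {ρ : Measure α}
    {s : Set α} {f : α → ℝ≥0∞} (hf : Measurable f) (h : s.indicator 1 ≤ f) :
    ρ s ≤ ∫⁻ a, f a ∂ρ :=
  calc ρ s ≤ 1 * ρ {a | 1 ≤ f a} := by
        rw [one_mul]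
        exact measure_mono fun a ha => by simpa [Set.indicator_of_mem ha] using h a
    _ ≤ ∫⁻ a, f a ∂ρ := mul_meas_ge_le_lintegral hf 1

theorem sum_range_smul_le_of_le_indicator {β : Type*} {K : β → ℝ≥0∞} {Ψ : ℕ → β → ℝ≥0∞}
    {η : ℝ≥0} (hΨ : ∀ m, Ψ m ≤ {p | (m + 1) * (η : ℝ≥0∞) < K p}.indicator 1) (M : ℕ) :
    ∑ m ∈ Finset.range M, η • Ψ m ≤ K := fun p => by
  refine le_trans ?_ (ENNReal.sum_range_indicator_Ioi_le (η : ℝ≥0∞) (K p) M)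
  simp only [Finset.sum_apply, Pi.smul_apply, ENNReal.smul_def, smul_eq_mul]
  refine Finset.sum_le_sum fun m _ => ?_
  calc (η : ℝ≥0∞) * Ψ m p ≤ η * {p | (m + 1) * (η : ℝ≥0∞) < K p}.indicator 1 p := by
        gcongr
        exact hΨ m p
    _ = _ := by simp [Set.indicator_apply]

section EnergySemicontinuity

variable {X Y : Type*} [TopologicalSpace X] [MeasurableSpace X] [BorelSpace X] [T2Space X]
  [LocallyCompactSpace X] [TopologicalSpace Y] [MeasurableSpace Y] [BorelSpace Y] [T2Space Y]
  [LocallyCompactSpace Y] {μ : Measure X} {ν : Measure Y}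

-- Each slice `{g > (m + 1) η}` is approximated by a compact set inside the open set
-- `{K > (m + 1) η}`, under which a bump from `prodTestFunctions` is placed; the bumps of all
-- slices, weighted by `η`, stay below `K`.
theorem sum_range_mul_measure_lt_le [IsFiniteMeasure μ] [IsFiniteMeasure ν] [μ.InnerRegular]
    [ν.InnerRegular] {K g : X × Y → ℝ≥0∞} (hK : LowerSemicontinuous K) (hgm : Measurable g)
    (hgK : g ≤ K) {t : ℝ≥0∞}
    (ht : ∀ Ψ ∈ prodTestFunctions X Y, Ψ ≤ K → ∫⁻ p, Ψ p ∂μ.prod ν ≤ t) (η : ℝ≥0) (M : ℕ) :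
    ∑ m ∈ Finset.range M, η * μ.prod ν {p | (m + 1) * (η : ℝ≥0∞) < g p} ≤ t := by
  refine ENNReal.le_of_forall_pos_le_add fun ε hε _ => ?_
  obtain ⟨δ, hδ, hδε⟩ := ENNReal.exists_nnreal_pos_mul_lt (a := M * η) (by finiteness)
    (ENNReal.coe_ne_zero.2 hε.ne')
  choose F hFB hFc hF using fun m : ℕ =>
    (hgm (measurableSet_Ioi (a := (m + 1) * (η : ℝ≥0∞)))).exists_isCompact_lt_add
      (μ := μ.prod ν) (measure_ne_top _ _) (ENNReal.coe_ne_zero.2 hδ.ne')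
  choose Ψ hΨ hFΨ hΨU using fun m : ℕ => exists_mem_prodTestFunctions_indicator_le (hFc m)
    (hK.isOpen_preimage ((m + 1) * η)) fun p hp => (hFB m hp).trans_le (hgK p)
  have hΦ : ∑ m ∈ Finset.range M, η • Ψ m ∈ prodTestFunctions X Y :=
    Submodule.sum_mem _ fun m _ => Submodule.smul_mem _ η (hΨ m)
  have hint : ∫⁻ p, (∑ m ∈ Finset.range M, η • Ψ m) p ∂μ.prod ν =
      ∑ m ∈ Finset.range M, η * ∫⁻ p, Ψ m p ∂μ.prod ν := by
    simp only [Finset.sum_apply, Pi.smul_apply, ENNReal.smul_def, smul_eq_mul]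
    rw [lintegral_finsetSum' _ fun m _ =>
      ((measurable_of_mem_prodTestFunctions (hΨ m)).const_mul _).aemeasurable]
    exact Finset.sum_congr rfl fun m _ =>
      lintegral_const_mul _ (measurable_of_mem_prodTestFunctions (hΨ m))
  calc ∑ m ∈ Finset.range M, η * μ.prod ν {p | (m + 1) * (η : ℝ≥0∞) < g p}
      ≤ ∑ m ∈ Finset.range M, (η * ∫⁻ p, Ψ m p ∂μ.prod ν + η * δ) :=
        Finset.sum_le_sum fun m _ => by
          rw [← mul_add]
          gcongr
          exact (hF m).le.trans (by
            gcongr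
            exact measure_le_lintegral_of_indicator_le
              (measurable_of_mem_prodTestFunctions (hΨ m)) (hFΨ m))
    _ = ∫⁻ p, (∑ m ∈ Finset.range M, η • Ψ m) p ∂μ.prod ν + δ * (M * η) := by
        rw [Finset.sum_add_distrib, Finset.sum_const, Finset.card_range, nsmul_eq_mul, hint]
        ring
    _ ≤ t + ε := add_le_add (ht _ hΦ (sum_range_smul_le_of_le_indicator hΨU M))
        (by exact_mod_cast hδε.le)

theorem lintegral_le_of_forall_prodTestFunctions_le [IsFiniteMeasure μ] [IsFiniteMeasure ν]
    [μ.InnerRegular] [ν.InnerRegular] {K : X × Y → ℝ≥0∞} (hK : LowerSemicontinuous K)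
    {t : ℝ≥0∞} (ht : ∀ Ψ ∈ prodTestFunctions X Y, Ψ ≤ K → ∫⁻ p, Ψ p ∂μ.prod ν ≤ t) :
    ∫⁻ p, K p ∂μ.prod ν ≤ t := by
  obtain ⟨g, hgm, hgK, hg⟩ := exists_measurable_le_lintegral_eq (μ.prod ν) K
  rw [hg]
  refine ENNReal.le_of_forall_pos_le_add fun ε hε _ => ?_
  obtain ⟨η, hη, hηε⟩ := ENNReal.exists_nnreal_pos_mul_lt (measure_ne_top (μ.prod ν) Set.univ)
    (ENNReal.coe_ne_zero.2 hε.ne')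
  calc ∫⁻ p, g p ∂μ.prod ν
      ≤ ∫⁻ p, ((η : ℝ≥0∞) + ∑' m : ℕ,
          (Set.Ioi ((m + 1) * (η : ℝ≥0∞))).indicator (fun _ => (η : ℝ≥0∞)) (g p)) ∂μ.prod ν :=
        lintegral_mono fun p => ENNReal.le_add_tsum_indicator_Ioi (ENNReal.coe_ne_zero.2 hη.ne') _
    _ = η * μ.prod ν Set.univ +
          ∑' m : ℕ, η * μ.prod ν {p | (m + 1) * (η : ℝ≥0∞) < g p} := by
        have hlevel : ∀ (m : ℕ) p, (Set.Ioi ((m + 1) * (η : ℝ≥0∞))).indicator (fun _ => (η : ℝ≥0∞))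
            (g p) = (g ⁻¹' Set.Ioi ((m + 1) * η)).indicator (fun _ => (η : ℝ≥0∞)) p :=
          fun _ _ => rfl
        simp only [hlevel]
        rw [lintegral_add_left measurable_const, lintegral_const,
          lintegral_tsum fun m => (measurable_const.indicator (hgm measurableSet_Ioi)).aemeasurable]
        simp only [lintegral_indicator_const (hgm measurableSet_Ioi)]
        rfl
    _ ≤ t + ε := by
        rw [add_comm]
        exact add_le_add (ENNReal.tsum_le_of_sum_range_le
          (sum_range_mul_measure_lt_le hK hgm hgK ht η)) hηε.le

theorem energy_le_of_tendsto {k : X → Y → ℝ≥0∞}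
    (hk : LowerSemicontinuous fun p : X × Y => k p.1 p.2) {ι : Type*} {l : Filter ι} [l.NeBot]
    {μi : ι → Measure X} {νi : ι → Measure Y} [∀ i, IsFiniteMeasure (μi i)]
    [∀ i, IsFiniteMeasure (νi i)] [IsFiniteMeasure μ] [IsFiniteMeasure ν] [μ.InnerRegular]
    [ν.InnerRegular] (hμ : Tendsto μi l (@nhds _ (vagueTop X) μ))
    (hν : Tendsto νi l (@nhds _ (vagueTop Y) ν)) {t : ℝ≥0∞}
    (ht : ∀ᶠ i in l, energy k (μi i) (νi i) ≤ t) : energy k μ ν ≤ t :=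
  lintegral_le_of_forall_prodTestFunctions_le hk fun _ hΨ hΨk =>
    le_of_tendsto (tendsto_lintegral_prod_of_mem_prodTestFunctions hΨ hμ hν)
      (ht.mono fun _ hi => (lintegral_mono hΨk).trans hi)

theorem iInf_energy_le_of_tendsto {k : X → Y → ℝ≥0∞}
    (hk : LowerSemicontinuous fun p : X × Y => k p.1 p.2) {S : Set (Measure Y)}
    (hSc : @IsCompact _ (vagueTop Y) S) (hSfin : ∀ ν ∈ S, IsFiniteMeasure ν)
    (hSreg : ∀ ν ∈ S, ν.InnerRegular) {ι : Type*} {l : Filter ι} [l.NeBot]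
    {μi : ι → Measure X} [∀ i, IsFiniteMeasure (μi i)] [IsFiniteMeasure μ] [μ.InnerRegular]
    (hμ : Tendsto μi l (@nhds _ (vagueTop X) μ)) {t : ℝ≥0∞}
    (ht : ∀ i, ⨅ ν ∈ S, energy k (μi i) ν ≤ t) : ⨅ ν ∈ S, energy k μ ν ≤ t := by
  refine le_of_forall_gt_imp_ge_of_dense fun t' ht' => ?_
  choose νi hνiS hνi using fun i => by
    simpa only [iInf_lt_iff, exists_prop] using (ht i).trans_lt ht'
  have := fun i => hSfin _ (hνiS i)
  let := vagueTop Y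
  obtain ⟨ν, hνS, hν⟩ := hSc (le_principal_iff.2 (mem_map.2 (univ_mem' hνiS)) : map νi l ≤ _)
  obtain ⟨U, hUl, hUν⟩ := mapClusterPt_iff_ultrafilter.1 hν
  have := hSfin ν hνS
  have := hSreg ν hνS
  exact iInf₂_le_of_le ν hνS (energy_le_of_tendsto hk (hμ.mono_left hUl) hUν
    (Eventually.of_forall fun i => (hνi i).le))

end EnergySemicontinuity

theorem iInf_energy_le_qlow {X Y : Type*} [MeasurableSpace X] [MeasurableSpace Y]
    (k : X → Y → ℝ≥0∞) {R : Set (Measure X)} (S : Set (Measure Y)) {μ : Measure X} (hμ : μ ∈ R) :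
    ⨅ ν ∈ S, energy k μ ν ≤ qlow k R S :=
  le_iSup₂ (f := fun μ _ => ⨅ ν ∈ S, energy k μ ν) μ hμ

theorem qlow_mono {X Y : Type*} [MeasurableSpace X] [MeasurableSpace Y] (k : X → Y → ℝ≥0∞)
    {R R' : Set (Measure X)} (S : Set (Measure Y)) (h : R ⊆ R') : qlow k R S ≤ qlow k R' S :=
  biSup_mono h

/-- Lemma 5: if `S(L)` is vaguely compact and every `μ ∈ R(H)` is the vague
limit of a net of measures of the family concentrated on compact subsets of `H`, then
`q̲(R(H), S(L)) = sup_{K ⊂⊂ H} q̲(R(K), S(L))`. -/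
theorem statement9 {X Y : Type*} [TopologicalSpace X] [MeasurableSpace X] [BorelSpace X]
    [LocallyCompactSpace X] [T2Space X]
    [TopologicalSpace Y] [MeasurableSpace Y] [BorelSpace Y]
    [LocallyCompactSpace Y] [T2Space Y]
    (k : X → Y → ℝ≥0∞) (hk : LowerSemicontinuous fun p : X × Y => k p.1 p.2)
    (H : Set X) (L : Set Y)
    (R : Set (Measure X)) (S : Set (Measure Y)) (hR : R ⊆ MM H) (hS : S ⊆ MM L)
    (hSc : @IsCompact _ (vagueTop Y) S)
    (hyp : ∀ μ ∈ R, ∃ (𝒦 : Set (Set X)) (m : Set X → Measure X),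
      𝒦.Nonempty ∧ (∀ K ∈ 𝒦, IsCompact K ∧ K ⊆ H) ∧ DirectedOn (· ⊆ ·) 𝒦 ∧
      (∀ K ∈ 𝒦, m K ∈ R ∧ Concentrated (m K) K) ∧
      @Filter.Tendsto ↥𝒦 (Measure X) (fun K => m K.1) Filter.atTop (@nhds _ (vagueTop X) μ)) :
    qlow k R S = ⨆ (K : Set X) (_ : IsCompact K) (_ : K ⊆ H),
      qlow k {μ ∈ R | Concentrated μ K} S := by
  refine le_antisymm (iSup₂_le fun μ hμ => ?_)
    (iSup₂_le fun K _ => iSup_le fun _ => qlow_mono k S fun μ hμ => hμ.1)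
  obtain ⟨𝒦, m, h𝒦, h𝒦H, hdir, hm, hlim⟩ := hyp μ hμ
  have : Nonempty 𝒦 := h𝒦.to_subtype
  have : IsDirectedOrder 𝒦 := hdir.isDirectedOrder
  have := fun K : 𝒦 => (hR (hm K K.2).1).1
  have := (hR hμ).1
  have := (hR hμ).2.2.1
  refine iInf_energy_le_of_tendsto hk hSc (fun ν hν => (hS hν).1) (fun ν hν => (hS hν).2.2.1) hlim
    fun K => ?_
  exact le_iSup₂_of_le K.1 (h𝒦H K K.2).1 <| le_iSup_of_le (h𝒦H K K.2).2 <|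
    iInf_energy_le_qlow k S (hm K K.2)

end
end

section
/- Let R(H) ⊆ M(H) be a w*-compact convex set of measures on a compact set H ⊆ X, and let the kernel k : X × X → [0,∞] be lower semicontinuous and positive. Then w(R(H)) ≤ q(R(H)), i.e. inf_{μ∈R(H)} E(μ,μ) ≤ inf_{μ∈R(H)} sup_{ν∈Ex R(H)} E(μ,ν). -/
open MeasureTheory Topology Filter ENNReal

noncomputable section

/-!
Fix `μ ∈ R` and `r < E(μ, μ) ≤ ∫ U^μ dμ`. Inner regularity of `μ` and lower semicontinuity of `k`
(through the tube lemma) give finitely many compact sets on which `U^μ` exceeds given levels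
uniformly, witnessed by measurable minorants of `k` on `X × X`; `k` itself need not be measurable
for the product σ-algebra. Urysohn functions then produce `f ∈ C_c(X)` with `r < ∫ f dμ` and
`∫ f dν ≤ E(μ, ν)` for every finite `ν`. The map `ν ↦ (∫ g dν)_{g ∈ C_c(X)}` is affine and vaguely
continuous, and injective on regular measures, so `∫ f dν` attains its maximum over the compact set
`R` at an extreme point `ν` of `R` (Krein–Milman), whence `r < ∫ f dμ ≤ ∫ f dν ≤ E(μ, ν)`.
-/

open NNReal Set Function CompactlySupported

namespace ENNReal

lemma exists_nnreal_lt_one_lt_mul {r T : ℝ≥0∞} (h : r < T) : ∃ θ : ℝ≥0, θ < 1 ∧ r < θ * T := by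
  have hlim : Tendsto (fun θ : ℝ≥0 ↦ (θ : ℝ≥0∞) * T) (𝓝[<] 1) (𝓝 T) := by
    simpa using ENNReal.Tendsto.mul_const
      ((ENNReal.continuous_coe.tendsto 1).mono_left nhdsWithin_le_nhds) (Or.inl one_ne_zero)
  have : (𝓝[<] (1 : ℝ≥0)).NeBot := nhdsLT_neBot_of_exists_lt ⟨0, one_pos⟩
  obtain ⟨θ, hθT, hθ⟩ := ((hlim.eventually (lt_mem_nhds h)).and self_mem_nhdsWithin).exists
  exact ⟨θ, hθ, hθT⟩

lemma exists_ne_zero_add_mul_lt {r T C : ℝ≥0∞} (h : r < T) (hC : C ≠ ∞) :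
    ∃ ε : ℝ≥0∞, ε ≠ 0 ∧ r + C * ε < T := by
  have hlim : Tendsto (fun ε ↦ r + C * ε) (𝓝[>] 0) (𝓝 r) := by
    simpa using (tendsto_const_nhds (x := r)).add (ENNReal.Tendsto.const_mul
      ((tendsto_id (x := 𝓝 (0 : ℝ≥0∞))).mono_left nhdsWithin_le_nhds) (Or.inr hC))
  obtain ⟨ε, hεT, hε⟩ := ((hlim.eventually (gt_mem_nhds h)).and self_mem_nhdsWithin).exists
  exact ⟨ε, hε.ne', hεT⟩

end ENNReal

section CompactSteps

variable {Y : Type*} [MeasurableSpace Y] {μ : Measure Y}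

lemma exists_simpleFunc_lt_lintegral {g : Y → ℝ≥0∞} {r : ℝ≥0∞} (hr : r < ∫⁻ y, g y ∂μ) :
    ∃ ψ : SimpleFunc Y ℝ≥0, (∀ y, ψ y ≠ 0 → (ψ y : ℝ≥0∞) < g y) ∧ r < ∫⁻ y, ψ y ∂μ := by
  simp only [lintegral_eq_nnreal, lt_iSup_iff] at hr
  obtain ⟨φ, hφg, hr⟩ := hr
  rw [← SimpleFunc.lintegral_eq_lintegral] at hr
  obtain ⟨θ, hθ1, hr⟩ := ENNReal.exists_nnreal_lt_one_lt_mul hr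
  refine ⟨φ.map (θ * ·), fun y hy ↦ ?_, ?_⟩
  · rw [SimpleFunc.map_apply] at hy ⊢
    have hφy : 0 < φ y := pos_of_ne_zero (right_ne_zero_of_mul hy)
    calc ((θ * φ y : ℝ≥0) : ℝ≥0∞) < φ y := ENNReal.coe_lt_coe.2 (mul_lt_of_lt_one_left hφy hθ1)
      _ ≤ g y := hφg y
  · simpa [lintegral_const_mul' _ _ ENNReal.coe_ne_top] using hr

variable [TopologicalSpace Y] [T2Space Y] [OpensMeasurableSpace Y]
  [IsFiniteMeasure μ] [μ.InnerRegular]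

lemma MeasureTheory.SimpleFunc.exists_compact_step_lt_lintegral (ψ : SimpleFunc Y ℝ≥0) {r : ℝ≥0∞}
    (hr : r < ∫⁻ y, ψ y ∂μ) :
    ∃ (s : Finset ℝ≥0) (K : ℝ≥0 → Set Y),
      (∀ c ∈ s, c ≠ 0 ∧ IsCompact (K c) ∧ K c ⊆ ψ ⁻¹' {c}) ∧
      r < ∫⁻ y, ⨆ c ∈ s, (K c).indicator (fun _ ↦ (c : ℝ≥0∞)) y ∂μ := by
  classical
  set s := ψ.range.filter (· ≠ 0)
  have hT : ∫⁻ y, ψ y ∂μ = ∑ c ∈ s, (c : ℝ≥0∞) * μ (ψ ⁻¹' {c}) := by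
    have := SimpleFunc.lintegral_eq_lintegral (ψ.map ((↑) : ℝ≥0 → ℝ≥0∞)) μ
    rw [SimpleFunc.map_lintegral] at this
    exact this.trans (Finset.sum_filter_of_ne fun c _ h ↦ by rintro rfl; simp at h).symm
  obtain ⟨ε, hε, hrε⟩ := ENNReal.exists_ne_zero_add_mul_lt (hT ▸ hr)
    (ENNReal.sum_ne_top.2 fun c _ ↦ ENNReal.coe_ne_top (r := c))
  have hK : ∀ c ∈ s, ∃ K ⊆ ψ ⁻¹' {c}, IsCompact K ∧ μ (ψ ⁻¹' {c}) < μ K + ε := fun c _ ↦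
    (ψ.measurableSet_preimage {c}).exists_isCompact_lt_add (measure_ne_top μ _) hε
  choose! K hKψ hKc hKμ using hK
  refine ⟨s, K, fun c hc ↦ ⟨(Finset.mem_filter.1 hc).2, hKc c hc, hKψ c hc⟩, ?_⟩
  have hsum : r < ∑ c ∈ s, (c : ℝ≥0∞) * μ (K c) := by
    refine lt_of_add_lt_add_right (hrε.trans_le ?_)
    rw [Finset.sum_mul, ← Finset.sum_add_distrib]
    gcongr with c hc
    rw [← mul_add]
    gcongr
    exact (hKμ c hc).le
  calc r < ∑ c ∈ s, (c : ℝ≥0∞) * μ (K c) := hsum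
    _ = ∫⁻ y, ∑ c ∈ s, (K c).indicator (fun _ ↦ (c : ℝ≥0∞)) y ∂μ := by
      rw [lintegral_finsetSum' _ fun c hc ↦
        (aemeasurable_const.indicator (hKc c hc).isClosed.measurableSet)]
      refine Finset.sum_congr rfl fun c hc ↦ ?_
      rw [lintegral_indicator_const (hKc c hc).isClosed.measurableSet]
    _ ≤ ∫⁻ y, ⨆ c ∈ s, (K c).indicator (fun _ ↦ (c : ℝ≥0∞)) y ∂μ := by
      -- the pieces lie in distinct fibres of `ψ`, so at most one term of the sum is nonzero
      refine MeasureTheory.lintegral_mono fun y ↦ ?_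
      set M := ⨆ c ∈ s, (K c).indicator (fun _ ↦ (c : ℝ≥0∞)) y
      calc ∑ c ∈ s, (K c).indicator (fun _ ↦ (c : ℝ≥0∞)) y
          ≤ ∑ c ∈ s, if ψ y = c then M else 0 := by
            gcongr with c hc
            split_ifs with h
            · exact le_iSup₂ (f := fun c _ ↦ (K c).indicator (fun _ ↦ (c : ℝ≥0∞)) y) c hc
            · exact (indicator_of_notMem (fun hy ↦ h (hKψ c hc hy)) _).le
        _ ≤ M := by rw [Finset.sum_ite_eq]; split_ifs <;> simp

theorem exists_compact_step_lt_lintegral {g : Y → ℝ≥0∞} {r : ℝ≥0∞} (hr : r < ∫⁻ y, g y ∂μ) :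
    ∃ (s : Finset ℝ≥0) (K : ℝ≥0 → Set Y),
      (∀ c ∈ s, IsCompact (K c) ∧ ∀ y ∈ K c, (c : ℝ≥0∞) < g y) ∧
      r < ∫⁻ y, ⨆ c ∈ s, (K c).indicator (fun _ ↦ (c : ℝ≥0∞)) y ∂μ := by
  obtain ⟨ψ, hψg, hr⟩ := exists_simpleFunc_lt_lintegral hr
  obtain ⟨s, K, hK, hr⟩ := ψ.exists_compact_step_lt_lintegral hr
  refine ⟨s, K, fun c hc ↦ ⟨(hK c hc).2.1, fun y hy ↦ ?_⟩, hr⟩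
  have hψy : ψ y = c := (hK c hc).2.2 hy
  exact hψy ▸ hψg y (hψy ▸ (hK c hc).1)

end CompactSteps

section KernelMinorants

variable {X Y : Type*} [TopologicalSpace X] [MeasurableSpace X] [T2Space X]
  [OpensMeasurableSpace X] [TopologicalSpace Y] [MeasurableSpace Y] [OpensMeasurableSpace Y]
  {k : X → Y → ℝ≥0∞} {μ : Measure X} [IsFiniteMeasure μ] [μ.InnerRegular] {b : ℝ≥0∞}

theorem exists_measurable_le_eventually_nhds_lt_lintegral (hk : LowerSemicontinuous (uncurry k))
    {y : Y} (hb : b < pot k μ y) :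
    ∃ G : X × Y → ℝ≥0∞, Measurable G ∧ G ≤ uncurry k ∧
      ∀ᶠ y' in 𝓝 y, b < ∫⁻ x, G (x, y') ∂μ := by
  obtain ⟨s, K, hK, hb⟩ := exists_compact_step_lt_lintegral hb
  have htube : ∀ c ∈ s, ∃ V : Set Y, IsOpen V ∧ y ∈ V ∧
      ∀ x ∈ K c, ∀ y' ∈ V, (c : ℝ≥0∞) < k x y' := by
    intro c hc
    obtain ⟨U, V, -, hV, hKU, hyV, hUV⟩ := generalized_tube_lemma (hK c hc).1 isCompact_singleton
      (hk.isOpen_preimage c) (by rintro ⟨x, y'⟩ ⟨hx, rfl⟩; exact (hK c hc).2 x hx)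
    exact ⟨V, hV, hyV rfl, fun x hx y' hy' ↦ hUV (mk_mem_prod (hKU hx) hy')⟩
  choose! V hVo hyV hV using htube
  set step : X → ℝ≥0∞ := fun x ↦ ⨆ c ∈ s, (K c).indicator (fun _ ↦ (c : ℝ≥0∞)) x
  have hstep : Measurable step := Measurable.biSup _ s.countable_toSet fun c hc ↦
    measurable_const.indicator (hK c hc).1.isClosed.measurableSet
  set W := ⋂ c ∈ s, V c
  have hW : IsOpen W := isOpen_biInter_finset hVo
  refine ⟨(Prod.snd ⁻¹' W).indicator fun p ↦ step p.1, (hstep.comp measurable_fst).indicator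
    (hW.measurableSet.preimage measurable_snd), fun p ↦ ?_, ?_⟩
  · by_cases hp : p.2 ∈ W
    · rw [indicator_of_mem (show p ∈ Prod.snd ⁻¹' W from hp)]
      exact iSup₂_le fun c hc ↦ indicator_apply_le'
        (fun hx ↦ (hV c hc _ hx p.2 (mem_iInter₂.1 hp c hc)).le) fun _ ↦ zero_le
    · rw [indicator_of_notMem (show p ∉ Prod.snd ⁻¹' W from hp)]
      exact zero_le
  · filter_upwards [hW.mem_nhds (mem_iInter₂.2 hyV)] with y' hy'
    have hG : ∀ x, (Prod.snd ⁻¹' W).indicator (fun p ↦ step p.1) (x, y') = step x :=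
      fun x ↦ indicator_of_mem (by exact hy') _
    simpa only [hG] using hb

theorem IsCompact.exists_measurable_le_eventually_nhdsSet_lt_lintegral
    (hk : LowerSemicontinuous (uncurry k)) {K : Set Y} (hK : IsCompact K)
    (hb : ∀ y ∈ K, b < pot k μ y) :
    ∃ G : X × Y → ℝ≥0∞, Measurable G ∧ G ≤ uncurry k ∧
      ∀ᶠ y in 𝓝ˢ K, b < ∫⁻ x, G (x, y) ∂μ := by
  refine hK.induction_on ?_ (fun s t hst ht ↦ ?_) (fun s t hs ht ↦ ?_) fun y hy ↦ ?_
  · exact ⟨0, measurable_const, fun _ ↦ zero_le, by simp⟩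
  · obtain ⟨G, hG, hGk, hev⟩ := ht
    exact ⟨G, hG, hGk, hev.filter_mono (nhdsSet_mono hst)⟩
  · obtain ⟨G₁, hG₁, hG₁k, hev₁⟩ := hs
    obtain ⟨G₂, hG₂, hG₂k, hev₂⟩ := ht
    refine ⟨G₁ ⊔ G₂, hG₁.sup hG₂, sup_le hG₁k hG₂k, ?_⟩
    rw [nhdsSet_union]
    exact ⟨hev₁.mono fun y hy ↦ hy.trans_le (lintegral_mono fun x ↦ le_sup_left),
      hev₂.mono fun y hy ↦ hy.trans_le (lintegral_mono fun x ↦ le_sup_right)⟩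
  · obtain ⟨G, hG, hGk, hev⟩ := exists_measurable_le_eventually_nhds_lt_lintegral hk (hb y hy)
    exact ⟨_, mem_nhdsWithin_of_mem_nhds (eventually_eventually_nhds.2 hev), G, hG, hGk,
      eventually_nhdsSet_iff_forall.2 fun _ hy' ↦ hy'⟩

end KernelMinorants

section Energy

variable {X Y : Type*} [MeasurableSpace X] [MeasurableSpace Y] {μ : Measure X} {ν : Measure Y}
  [SFinite μ] [SFinite ν]

lemma energy_le_lintegral_pot (k : X → Y → ℝ≥0∞) : energy k μ ν ≤ ∫⁻ y, pot k μ y ∂ν := by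
  calc energy k μ ν = ∫⁻ z, k z.2 z.1 ∂(μ.prod ν).map MeasurableEquiv.prodComm :=
        (lintegral_map_equiv (fun z : Y × X ↦ k z.2 z.1) MeasurableEquiv.prodComm).symm
    _ = ∫⁻ z, k z.2 z.1 ∂(ν.prod μ) := by rw [← Measure.prod_swap (μ := μ) (ν := ν)]; rfl
    _ ≤ ∫⁻ y, pot k μ y ∂ν := lintegral_prod_le _

lemma lintegral_lintegral_le_energy {k : X → Y → ℝ≥0∞} {G : X × Y → ℝ≥0∞} (hG : Measurable G)
    (hGk : G ≤ uncurry k) : ∫⁻ y, ∫⁻ x, G (x, y) ∂μ ∂ν ≤ energy k μ ν :=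
  (lintegral_prod_symm G hG.aemeasurable).symm.trans_le (lintegral_mono hGk)

end Energy

section ContinuousMinorant

variable {X : Type*} [TopologicalSpace X] [T2Space X] [LocallyCompactSpace X]

lemma exists_compactlySupported_eqOn_one_eqOn_zero {K W : Set X} (hK : IsCompact K)
    (hW : IsOpen W) (hKW : K ⊆ W) :
    ∃ u : C_c(X, ℝ), EqOn u 1 K ∧ EqOn u 0 Wᶜ ∧ ∀ x, u x ∈ Icc (0 : ℝ) 1 := by
  obtain ⟨u, hu1, hu0, hu, hu01⟩ := exists_continuous_one_zero_of_isCompact hK hW.isClosed_compl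
    (disjoint_compl_right_iff_subset.2 hKW)
  exact ⟨⟨u, hu⟩, hu1, hu0, hu01⟩

lemma exists_compactlySupported_ge_on_compact_le_on_open (s : Finset ℝ≥0) {K W : ℝ≥0 → Set X}
    (hK : ∀ c ∈ s, IsCompact (K c)) (hW : ∀ c ∈ s, IsOpen (W c)) (hKW : ∀ c ∈ s, K c ⊆ W c) :
    ∃ f : C_c(X, ℝ), (∀ x, 0 ≤ f x) ∧ (∀ c ∈ s, ∀ x ∈ K c, (c : ℝ) ≤ f x) ∧
      ∀ y, f y = 0 ∨ ∃ c ∈ s, y ∈ W c ∧ f y ≤ c := by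
  rcases s.eq_empty_or_nonempty with rfl | hs
  · exact ⟨0, fun _ ↦ le_rfl, by simp, fun _ ↦ Or.inl rfl⟩
  choose! u hu1 hu0 hu01 using fun c hc ↦
    exists_compactlySupported_eqOn_one_eqOn_zero (hK c hc) (hW c hc) (hKW c hc)
  set f : C_c(X, ℝ) := s.sup' hs fun c ↦ (c : ℝ) • u c
  have hf_apply : ∀ x, f x = s.sup' hs fun c ↦ (c : ℝ) * u c x := fun x ↦ by
    simp [f, CompactlySupportedContinuousMap.finsetSup'_apply]
  have hf_ge : ∀ c ∈ s, ∀ x, (c : ℝ) * u c x ≤ f x := fun c hc x ↦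
    (hf_apply x).symm ▸ Finset.le_sup' (fun c : ℝ≥0 ↦ (c : ℝ) * u c x) hc
  refine ⟨f, fun x ↦ (mul_nonneg hs.choose.2 (hu01 _ hs.choose_spec x).1).trans
    (hf_ge _ hs.choose_spec x), fun c hc x hx ↦ by simpa [hu1 c hc hx] using hf_ge c hc x,
    fun y ↦ ?_⟩
  obtain ⟨c, hc, hfc⟩ := Finset.exists_mem_eq_sup' hs fun c : ℝ≥0 ↦ (c : ℝ) * u c y
  rw [hf_apply, hfc]
  by_cases hy : y ∈ W c
  · exact Or.inr ⟨c, hc, hy, mul_le_of_le_one_right c.2 (hu01 c hc y).2⟩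
  · exact Or.inl (by simp [hu0 c hc hy])

variable [MeasurableSpace X] [BorelSpace X]

theorem exists_compactlySupported_lt_integral_le_energy {k : X → X → ℝ≥0∞}
    (hk : LowerSemicontinuous (uncurry k)) {μ : Measure X} [IsFiniteMeasure μ] [μ.InnerRegular]
    {r : ℝ≥0∞} (hr : r < ∫⁻ y, pot k μ y ∂μ) :
    ∃ f : C_c(X, ℝ), r < ENNReal.ofReal (∫ x, f x ∂μ) ∧
      ∀ (ν : Measure X) [IsFiniteMeasure ν], ENNReal.ofReal (∫ x, f x ∂ν) ≤ energy k μ ν := by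
  obtain ⟨s, K, hK, hr⟩ := exists_compact_step_lt_lintegral hr
  have hGW : ∀ c ∈ s, ∃ G : X × X → ℝ≥0∞, Measurable G ∧ G ≤ uncurry k ∧ ∃ W, IsOpen W ∧
      K c ⊆ W ∧ ∀ y ∈ W, (c : ℝ≥0∞) < ∫⁻ x, G (x, y) ∂μ := by
    intro c hc
    obtain ⟨G, hG, hGk, hev⟩ :=
      (hK c hc).1.exists_measurable_le_eventually_nhdsSet_lt_lintegral hk (hK c hc).2
    exact ⟨G, hG, hGk, mem_nhdsSet_iff_exists.1 hev⟩
  choose! G hG hGk W hW hKW hGW using hGW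
  obtain ⟨f, hf0, hfK, hfW⟩ :=
    exists_compactlySupported_ge_on_compact_le_on_open s (fun c hc ↦ (hK c hc).1) hW hKW
  set Gs : X × X → ℝ≥0∞ := fun p ↦ ⨆ c ∈ s, G c p
  have hf_le : ∀ y, ENNReal.ofReal (f y) ≤ ∫⁻ x, Gs (x, y) ∂μ := by
    intro y
    obtain hfy | ⟨c, hc, hy, hfy⟩ := hfW y
    · simp [hfy]
    calc ENNReal.ofReal (f y) ≤ c := by
          rw [← ENNReal.ofReal_coe_nnreal]
          exact ENNReal.ofReal_le_ofReal hfy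
      _ ≤ ∫⁻ x, G c (x, y) ∂μ := (hGW c hc y hy).le
      _ ≤ ∫⁻ x, Gs (x, y) ∂μ := lintegral_mono fun x ↦
          le_iSup₂ (f := fun c (_ : c ∈ s) ↦ G c (x, y)) c hc
  have hint : ∀ (ν : Measure X) [IsFiniteMeasure ν],
      ENNReal.ofReal (∫ x, f x ∂ν) = ∫⁻ x, ENNReal.ofReal (f x) ∂ν := fun ν _ ↦
    ofReal_integral_eq_lintegral_ofReal f.integrable (ae_of_all _ hf0)
  refine ⟨f, ?_, fun ν _ ↦ ?_⟩
  · rw [hint]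
    refine hr.trans_le (lintegral_mono fun x ↦ iSup₂_le fun c hc ↦ indicator_apply_le' ?_ ?_)
    · intro hx
      rw [← ENNReal.ofReal_coe_nnreal]
      exact ENNReal.ofReal_le_ofReal (hfK c hc x hx)
    · exact fun _ ↦ zero_le
  · rw [hint]
    exact (lintegral_mono hf_le).trans
      (lintegral_lintegral_le_energy (Measurable.biSup _ s.countable_toSet hG)
        fun p ↦ iSup₂_le fun c hc ↦ hGk c hc p)

end ContinuousMinorant

section ExtremePoints

lemma IsCompact.exists_mem_extremePoints_le {E : Type*} [AddCommGroup E] [Module ℝ E]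
    [TopologicalSpace E] [T2Space E] [IsTopologicalAddGroup E] [ContinuousSMul ℝ E]
    [LocallyConvexSpace ℝ E] {s : Set E} (hs : IsCompact s) (l : E →L[ℝ] ℝ) {x : E}
    (hx : x ∈ s) : ∃ e ∈ s.extremePoints ℝ, l x ≤ l e := by
  obtain ⟨z, hzs, hz⟩ := hs.exists_isMaxOn ⟨x, hx⟩ l.continuous.continuousOn
  have hF : IsExposed ℝ s {y ∈ s | ∀ w ∈ s, l w ≤ l y} := fun _ ↦ ⟨l, rfl⟩
  obtain ⟨e, he⟩ := (hF.isCompact hs).extremePoints_nonempty ⟨z, hzs, hz⟩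
  exact ⟨e, hF.isExtreme.extremePoints_subset_extremePoints he, he.1.2 x hx⟩

variable {X : Type*} [TopologicalSpace X] [MeasurableSpace X]

def ccIntegrals (μ : Measure X) : C_c(X, ℝ) → ℝ := fun f ↦ ∫ x, f x ∂μ

lemma continuous_ccIntegrals : @Continuous _ _ (vagueTop X) _ (ccIntegrals (X := X)) := by
  let := vagueTop X
  exact continuous_pi fun f ↦ continuous_iff_le_induced.2 <|
    iInf_le_of_le f <| iInf_le_of_le f.continuous <| iInf_le _ f.hasCompactSupport

variable [OpensMeasurableSpace X]

lemma ccIntegrals_add {μ ν : Measure X} [IsFiniteMeasureOnCompacts μ]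
    [IsFiniteMeasureOnCompacts ν] {a b : ℝ≥0∞} (ha : a ≠ ∞) (hb : b ≠ ∞) :
    ccIntegrals (a • μ + b • ν) = a.toReal • ccIntegrals μ + b.toReal • ccIntegrals ν := by
  funext f
  simp [ccIntegrals, integral_add_measure (f.integrable.smul_measure ha)
    (f.integrable.smul_measure hb), integral_smul_measure]

variable [T2Space X] [BorelSpace X] [LocallyCompactSpace X]

lemma mem_extremePts_of_ccIntegrals_mem_extremePoints {R : Set (Measure X)}
    (hR : ∀ μ ∈ R, μ.Regular) {ν : Measure X} (hν : ν ∈ R)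
    (he : ccIntegrals ν ∈ (ccIntegrals '' R).extremePoints ℝ) : ν ∈ ExtremePts R := by
  have hinj : ∀ μ ∈ R, ccIntegrals μ = ccIntegrals ν → μ = ν := fun μ hμ h ↦ by
    have := hR μ hμ
    have := hR ν hν
    exact Measure.ext_of_integral_eq_on_compactlySupported fun f ↦ congrFun h f
  refine ⟨hν, fun μ₁ hμ₁ μ₂ hμ₂ a b ha hb hab hν_eq ↦ ?_⟩
  have ha' : a ≠ ∞ := ne_top_of_le_ne_top ENNReal.one_ne_top (hab ▸ le_self_add)
  have hb' : b ≠ ∞ := ne_top_of_le_ne_top ENNReal.one_ne_top (hab ▸ le_add_self)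
  have := hR μ₁ hμ₁
  have := hR μ₂ hμ₂
  have hseg : ccIntegrals ν ∈ openSegment ℝ (ccIntegrals μ₁) (ccIntegrals μ₂) :=
    ⟨a.toReal, b.toReal, ENNReal.toReal_pos ha.ne' ha', ENNReal.toReal_pos hb.ne' hb',
      by rw [← ENNReal.toReal_add ha' hb', hab, ENNReal.toReal_one],
      by rw [hν_eq, ccIntegrals_add ha' hb']⟩
  obtain ⟨h₁, h₂⟩ := (mem_extremePoints.1 he).2 _ (mem_image_of_mem _ hμ₁) _
    (mem_image_of_mem _ hμ₂) hseg
  exact ⟨(hinj μ₁ hμ₁ h₁).symm, (hinj μ₂ hμ₂ h₂).symm⟩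

theorem exists_mem_extremePts_integral_le {R : Set (Measure X)} (hR : ∀ μ ∈ R, μ.Regular)
    (hRc : VCompact R) (f : C_c(X, ℝ)) {μ : Measure X} (hμ : μ ∈ R) :
    ∃ ν ∈ ExtremePts R, ∫ x, f x ∂μ ≤ ∫ x, f x ∂ν := by
  let := vagueTop X
  obtain ⟨_, he, hle⟩ := (hRc.image continuous_ccIntegrals).exists_mem_extremePoints_le
    (ContinuousLinearMap.proj f) (mem_image_of_mem _ hμ)
  obtain ⟨ν, hν, rfl⟩ := he.1
  exact ⟨ν, mem_extremePts_of_ccIntegrals_mem_extremePoints hR hν he, hle⟩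

end ExtremePoints

theorem statement10_general {X : Type*} [TopologicalSpace X] [MeasurableSpace X] [BorelSpace X]
    [LocallyCompactSpace X] [T2Space X]
    (k : X → X → ℝ≥0∞) (hk : LowerSemicontinuous fun p : X × X => k p.1 p.2)
    (H : Set X)
    (R : Set (Measure X)) (hR : R ⊆ MM H) (hRc : VCompact R) :
    ww k R ≤ qup k R (ExtremePts R) := by
  refine iInf₂_mono fun μ hμ ↦ le_of_forall_lt fun r hr ↦ ?_
  obtain ⟨_, _, _, -⟩ := hR hμ
  obtain ⟨f, hfμ, hfE⟩ :=
    exists_compactlySupported_lt_integral_le_energy hk (hr.trans_le (energy_le_lintegral_pot k))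
  obtain ⟨ν, hνext, hμν⟩ := exists_mem_extremePts_integral_le (fun ν hν ↦ (hR hν).2.1) hRc f hμ
  have := (hR hνext.1).1
  calc r < ENNReal.ofReal (∫ x, f x ∂μ) := hfμ
    _ ≤ ENNReal.ofReal (∫ x, f x ∂ν) := ENNReal.ofReal_le_ofReal hμν
    _ ≤ energy k μ ν := hfE ν
    _ ≤ ⨆ ν ∈ ExtremePts R, energy k μ ν := le_iSup₂ (f := fun ν _ ↦ energy k μ ν) ν hνext

/-- Lemma 6: for a `w*`-compact convex `R(H)` on a compact set `H`
and a positive l.s.c. kernel, `w(R(H)) ≤ q(R(H))`. -/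
theorem statement10 {X : Type*} [TopologicalSpace X] [MeasurableSpace X] [BorelSpace X]
    [LocallyCompactSpace X] [T2Space X]
    (k : X → X → ℝ≥0∞) (hk : LowerSemicontinuous fun p : X × X => k p.1 p.2)
    (H : Set X) (hH : IsCompact H)
    (R : Set (Measure X)) (hR : R ⊆ MM H) (hRc : VCompact R) (hRconv : ConvexM R) :
    ww k R ≤ qup k R (ExtremePts R) :=
  statement10_general k hk H R hR hRc
end
end

section
/- Let R(H) ⊆ M(H) be convex, S(L) ⊆ M(L), and R_n(H) = {μ ∈ R(H) : card(supp μ) ≤ n}. Then for all m, n ≥ 1, q̲(R_{m+n}(H), S(L)) ≥ (m/(m+n)) · q̲(R_m(H), S(L)) + (n/(m+n)) · q̲(R_n(H), S(L)); consequently the sequence n ↦ q̲(R_n(H), S(L)) is quasi-increasing and converges (in the extended reals) as n → ∞. -/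
open MeasureTheory Topology Filter ENNReal

noncomputable section

/-!
If `μ ∈ R_m`, `ν ∈ R_n` and `a + b = 1`, then `a • μ + b • ν` lies in `R` by convexity and is
supported in the union of the two supports, so it lies in `R_{m+n}`. As the energy is affine in
its first argument, `inf_σ E(a • μ + b • ν, σ) ≥ a · inf_σ E(μ, σ) + b · inf_σ E(ν, σ)`; taking
`a = m/(m+n)`, `b = n/(m+n)` and the supremum over `μ` and `ν` gives the inequality. Since `R_n`
grows with `n`, the Chebyshev constants increase, hence converge in `[0, ∞]`.
-/

theorem MeasureTheory.Measure.add_prod' {X Y : Type*} [MeasurableSpace X] [MeasurableSpace Y]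
    (μ μ' : Measure X) (ν : Measure Y) [SFinite ν] :
    (μ + μ').prod ν = μ.prod ν + μ'.prod ν := by
  ext s hs
  simp only [Measure.add_apply, Measure.prod_apply hs, lintegral_add_measure]

lemma energy_add_smul_left {X Y : Type*} [MeasurableSpace X] [MeasurableSpace Y]
    (k : X → Y → ℝ≥0∞) (μ ν : Measure X) (σ : Measure Y) [SFinite σ] (a b : ℝ≥0∞) :
    energy k (a • μ + b • ν) σ = a * energy k μ σ + b * energy k ν σ := by
  simp only [energy, Measure.add_prod', Measure.prod_smul_left, lintegral_add_measure,
    lintegral_smul_measure, smul_eq_mul]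

section Support

variable {X : Type*} [TopologicalSpace X] [MeasurableSpace X]

lemma msupp_add_subset (μ ν : Measure X) : msupp (μ + ν) ⊆ msupp μ ∪ msupp ν := by
  intro x hx
  by_contra h
  simp only [Set.mem_union, msupp, Set.mem_ofPred_eq, not_or, not_forall, not_lt,
    nonpos_iff_eq_zero] at h
  obtain ⟨⟨U, hU, hμU⟩, ⟨V, hV, hνV⟩⟩ := h
  have hpos : 0 < (μ + ν) (U ∩ V) := hx (U ∩ V) (inter_mem hU hV)
  rw [Measure.add_apply, measure_mono_null Set.inter_subset_left hμU,
    measure_mono_null Set.inter_subset_right hνV, add_zero] at hpos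
  exact hpos.false

lemma msupp_smul_subset (c : ℝ≥0∞) (μ : Measure X) : msupp (c • μ) ⊆ msupp μ :=
  fun _ hx U hU => pos_iff_ne_zero.mpr (right_ne_zero_of_mul (hx U hU).ne')

lemma Rn_mono (R : Set (Measure X)) {m n : ℕ} (h : m ≤ n) : Rn R m ⊆ Rn R n :=
  fun _ ⟨hμ, s, hs, hcard⟩ => ⟨hμ, s, hs, hcard.trans h⟩

lemma add_smul_mem_Rn_add [DecidableEq X] {R : Set (Measure X)} (hR : ConvexM R) {m n : ℕ}
    {μ ν : Measure X} (hμ : μ ∈ Rn R m) (hν : ν ∈ Rn R n) {a b : ℝ≥0∞} (hab : a + b = 1) :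
    a • μ + b • ν ∈ Rn R (m + n) := by
  obtain ⟨hμR, s, hsμ, hs⟩ := hμ
  obtain ⟨hνR, t, htν, ht⟩ := hν
  refine ⟨hR μ hμR ν hνR a b hab, s ∪ t, fun x hx => ?_,
    (Finset.card_union_le s t).trans (add_le_add hs ht)⟩
  rw [Finset.coe_union]
  exact (msupp_add_subset _ _ hx).imp (fun h => hsμ (msupp_smul_subset a μ h))
    (fun h => htν (msupp_smul_subset b ν h))

end Support

section Chebyshev

variable {X Y : Type*} [TopologicalSpace X] [MeasurableSpace X] [MeasurableSpace Y]

lemma qlow_Rn_monotone (k : X → Y → ℝ≥0∞) (R : Set (Measure X)) (S : Set (Measure Y)) :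
    Monotone fun n => qlow k (Rn R n) S :=
  fun _ _ h => biSup_mono (Rn_mono R h)

lemma mul_qlow_Rn_add_mul_qlow_Rn_le (k : X → Y → ℝ≥0∞) {R : Set (Measure X)}
    (hR : ConvexM R) {S : Set (Measure Y)} (hS : ∀ σ ∈ S, SFinite σ) (m n : ℕ)
    {a b : ℝ≥0∞} (hab : a + b = 1) :
    a * qlow k (Rn R m) S + b * qlow k (Rn R n) S ≤ qlow k (Rn R (m + n)) S := by
  classical
  rcases (Rn R m).eq_empty_or_nonempty with hm | hm
  · rw [show qlow k (Rn R m) S = 0 by simp [qlow, hm], mul_zero, zero_add]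
    exact (mul_le_of_le_one_left' (hab ▸ le_add_self)).trans
      (qlow_Rn_monotone k R S (Nat.le_add_left n m))
  rcases (Rn R n).eq_empty_or_nonempty with hn | hn
  · rw [show qlow k (Rn R n) S = 0 by simp [qlow, hn], mul_zero, add_zero]
    exact (mul_le_of_le_one_left' (hab ▸ le_self_add)).trans
      (qlow_Rn_monotone k R S (Nat.le_add_right m n))
  simp only [qlow, ENNReal.mul_iSup]
  refine biSup_add_biSup_le hm hn fun μ hμ ν hν => ?_
  refine le_iSup₂_of_le (a • μ + b • ν) (add_smul_mem_Rn_add hR hμ hν hab) ?_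
  refine le_iInf₂ fun σ hσ => ?_
  have := hS σ hσ
  rw [energy_add_smul_left]
  gcongr <;> exact iInf₂_le σ hσ

end Chebyshev

theorem statement14_general {X Y : Type*} [TopologicalSpace X] [MeasurableSpace X]
    [TopologicalSpace Y] [MeasurableSpace Y]
    (k : X → Y → ℝ≥0∞)
    (L : Set Y)
    (R : Set (Measure X)) (S : Set (Measure Y))
    (hRconv : ConvexM R) (hS : S ⊆ MM L) :
    (∀ m n : ℕ, 1 ≤ m → 1 ≤ n →
      (m : ℝ≥0∞) / ((m : ℝ≥0∞) + (n : ℝ≥0∞)) * qlow k (Rn R m) S +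
        (n : ℝ≥0∞) / ((m : ℝ≥0∞) + (n : ℝ≥0∞)) * qlow k (Rn R n) S ≤
      qlow k (Rn R (m + n)) S) ∧
    ∃ l : ℝ≥0∞, Filter.Tendsto (fun n => qlow k (Rn R n) S) Filter.atTop (𝓝 l) := by
  have hSfin : ∀ σ ∈ S, SFinite σ := fun σ hσ => by
    have := (hS hσ).1
    infer_instance
  refine ⟨fun m n hm _ => mul_qlow_Rn_add_mul_qlow_Rn_le k hRconv hSfin m n ?_,
    _, tendsto_atTop_iSup (qlow_Rn_monotone k R S)⟩
  have hmn : (m : ℝ≥0∞) + n ≠ 0 := by positivity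
  rw [ENNReal.div_add_div_same, ENNReal.div_self hmn (by finiteness)]

/-- superadditivity of the Chebyshev constants
`q̲(R_{m+n}(H), S(L)) ≥ (m/(m+n)) q̲(R_m(H), S(L)) + (n/(m+n)) q̲(R_n(H), S(L))`,
hence the sequence of Chebyshev constants converges in the extended reals. -/
theorem statement14 {X Y : Type*} [TopologicalSpace X] [MeasurableSpace X] [BorelSpace X]
    [LocallyCompactSpace X] [T2Space X]
    [TopologicalSpace Y] [MeasurableSpace Y] [BorelSpace Y]
    [LocallyCompactSpace Y] [T2Space Y]
    (k : X → Y → ℝ≥0∞) (hk : LowerSemicontinuous fun p : X × Y => k p.1 p.2)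
    (H : Set X) (L : Set Y)
    (R : Set (Measure X)) (S : Set (Measure Y))
    (hR : R ⊆ MM H) (hRconv : ConvexM R) (hS : S ⊆ MM L) :
    (∀ m n : ℕ, 1 ≤ m → 1 ≤ n →
      (m : ℝ≥0∞) / ((m : ℝ≥0∞) + (n : ℝ≥0∞)) * qlow k (Rn R m) S +
        (n : ℝ≥0∞) / ((m : ℝ≥0∞) + (n : ℝ≥0∞)) * qlow k (Rn R n) S ≤
      qlow k (Rn R (m + n)) S) ∧
    ∃ l : ℝ≥0∞, Filter.Tendsto (fun n => qlow k (Rn R n) S) Filter.atTop (𝓝 l) :=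
  statement14_general k L R S hRconv hS

end
end

section
/- Let X and Z be compact metrizable spaces, Φ : X × Z → ℝ and g : Z → ℝ continuous, and k a positive symmetric lower semicontinuous kernel on X × X. Assume R^e_{Φ,g}(X) := {μ ∈ M₁(X) : ∫_X Φ(x,z) dμ(x) = g(z) for all z ∈ Z} is nonempty. Define the cutting-plane sequence: choose any z₁, z₂ ∈ Z and set Z₂ = {z₁, z₂}; given Z_{2n} = {z₁, …, z_{2n}}, let μ_n minimize the energy E(μ) over R^e_{Φ,g,Z_{2n}}(X) := {μ ∈ M₁(X) : ∫_X Φ(x,z) dμ(x) = g(z) for z ∈ Z_{2n}}, set Ψ_n(z) = ∫_X Φ(x,z) dμ_n(x) − g(z), and (if Ψ_n is not identically 0) choose z_{2n+1} minimizing Ψ_n on Z and z_{2n+2} maximizing Ψ_n on Z, setting Z_{2n+2} = Z_{2n} ∪ {z_{2n+1}, z_{2n+2}}. Then lim_{n→∞} w(R^e_{Φ,g,Z_{2n}}(X)) = w(R^e_{Φ,g}(X)). -/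
open MeasureTheory Topology Filter ENNReal

noncomputable section

/-!
The values `w(R^e_{Φ,g,Z_{2n}}(X))` increase with `n` and are bounded by `w(R^e_{Φ,g}(X))`, so only
the lower bound on their limit `S` needs an argument. Since `M₁(X)` is compact, a subsequence of the
minimizers `μ_n` converges weakly to some `μ`, and `E(μ) ≤ S` because the energy of a lower
semicontinuous kernel is weakly lower semicontinuous (`μ ↦ μ ⊗ μ` is continuous, and portmanteau).
It remains to see that `μ` satisfies every constraint. Along the subsequence `Ψ_n` converges
uniformly on `Z` to `Ψ = ∫ Φ(x, ·) dμ - g`, and `Ψ` vanishes at every `z_i` because each constraint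
is eventually imposed. Hence `Ψ_n(z_{2n+1}) → 0` and `Ψ_n(z_{2n+2}) → 0`, and the squeeze
`Ψ_n(z_{2n+1}) ≤ Ψ_n ≤ Ψ_n(z_{2n+2})` forces `Ψ = 0`.
-/

open Set

namespace MeasureTheory

section LowerSemicontinuous

variable {Ω ι : Type*} [MeasurableSpace Ω] [TopologicalSpace Ω] [OpensMeasurableSpace Ω]
  {L : Filter ι} [L.IsCountablyGenerated] {μ : Measure Ω} {μs : ι → Measure Ω}

lemma lintegral_ofReal_le_liminf_of_lowerSemicontinuous {f : Ω → ℝ}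
    (hf : LowerSemicontinuous f) (hf_nn : 0 ≤ f)
    (h_opens : ∀ G, IsOpen G → μ G ≤ L.liminf fun i ↦ μs i G) :
    ∫⁻ x, ENNReal.ofReal (f x) ∂μ ≤ L.liminf fun i ↦ ∫⁻ x, ENNReal.ofReal (f x) ∂μs i := by
  simp_rw [lintegral_eq_lintegral_meas_lt _ (Eventually.of_forall hf_nn)
    hf.measurable.aemeasurable]
  calc ∫⁻ t in Ioi 0, μ {a | t < f a}
      ≤ ∫⁻ t in Ioi 0, L.liminf fun i ↦ μs i {a | t < f a} :=
        lintegral_mono fun t ↦ h_opens _ (hf.isOpen_preimage t)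
    _ ≤ L.liminf fun i ↦ ∫⁻ t in Ioi 0, μs i {a | t < f a} :=
        lintegral_liminf_le fun i ↦ Antitone.measurable fun s t hst ↦
          measure_mono fun _ hx ↦ hst.trans_lt hx

lemma lintegral_le_liminf_of_lowerSemicontinuous {F : Ω → ℝ≥0∞} (hF : LowerSemicontinuous F)
    (h_opens : ∀ G, IsOpen G → μ G ≤ L.liminf fun i ↦ μs i G) :
    ∫⁻ x, F x ∂μ ≤ L.liminf fun i ↦ ∫⁻ x, F x ∂μs i := by
  have h_trunc : ∀ (n : ℕ) x, ENNReal.ofReal (truncateToReal n (F x)) = min (n : ℝ≥0∞) (F x) :=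
    fun n x ↦ ofReal_toReal (ne_top_of_le_ne_top (natCast_ne_top n) (min_le_left _ _))
  have h_sup : ∀ x, ⨆ n : ℕ, min (n : ℝ≥0∞) (F x) = F x := fun x ↦ by
    rw [← iSup_inf_eq, iSup_natCast, top_inf_eq]
  calc ∫⁻ x, F x ∂μ = ⨆ n : ℕ, ∫⁻ x, ENNReal.ofReal (truncateToReal n (F x)) ∂μ := by
        simp_rw [h_trunc]
        rw [← lintegral_iSup (fun n ↦ measurable_const.min hF.measurable)
          fun m n hmn x ↦ min_le_min_right _ (Nat.cast_le.2 hmn)]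
        simp_rw [h_sup]
    _ ≤ L.liminf fun i ↦ ∫⁻ x, F x ∂μs i := iSup_le fun n ↦
        (lintegral_ofReal_le_liminf_of_lowerSemicontinuous
          ((continuous_truncateToReal (natCast_ne_top n)).comp_lowerSemicontinuous hF
            (monotone_truncateToReal (natCast_ne_top n))) (fun _ ↦ truncateToReal_nonneg)
          h_opens).trans <|
        liminf_le_liminf <| Eventually.of_forall fun i ↦ lintegral_mono fun x ↦
          (h_trunc n x).le.trans (min_le_right _ _)

end LowerSemicontinuous

namespace ProbabilityMeasure

variable {X Z ι : Type*} [TopologicalSpace X] [CompactSpace X] [MeasurableSpace X]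
  [OpensMeasurableSpace X] [TopologicalSpace Z]

lemma continuous_integral_continuousMap_prod :
    Continuous fun p : ProbabilityMeasure X × C(X, ℝ) ↦ ∫ x, p.2 x ∂p.1 := by
  refine continuous_prod_of_continuous_lipschitzWith' _ 1 (fun ν ↦ ?_)
    continuous_integral_continuousMap
  have h_int (f : C(X, ℝ)) : Integrable f (ν : Measure X) :=
    (BoundedContinuousFunction.mkOfCompact f).integrable _
  refine LipschitzWith.of_dist_le_mul fun f f' ↦ ?_
  dsimp only
  rw [NNReal.coe_one, one_mul, Real.dist_eq, dist_eq_norm, ← integral_sub (h_int f) (h_int f')]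
  simpa using norm_integral_le_of_norm_le_const (μ := (ν : Measure X))
    (Eventually.of_forall fun x ↦ (f - f').norm_coe_le_norm x)

lemma continuous_integral_of_continuous_uncurry {Φ : X → Z → ℝ}
    (hΦ : Continuous fun p : X × Z ↦ Φ p.1 p.2) :
    Continuous fun p : ProbabilityMeasure X × Z ↦ ∫ x, Φ x p.2 ∂p.1 :=
  let T : C(Z, C(X, ℝ)) := ContinuousMap.curry ⟨fun p : Z × X ↦ Φ p.2 p.1, by fun_prop⟩
  continuous_integral_continuousMap_prod.comp <|
    continuous_fst.prodMk (T.continuous.comp continuous_snd)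

lemma tendstoUniformly_integral_of_tendsto [CompactSpace Z] {Φ : X → Z → ℝ}
    (hΦ : Continuous fun p : X × Z ↦ Φ p.1 p.2) {L : Filter ι} {μ : ProbabilityMeasure X}
    {μs : ι → ProbabilityMeasure X} (h : Tendsto μs L (𝓝 μ)) :
    TendstoUniformly (fun i w ↦ ∫ x, Φ x w ∂μs i) (fun w ↦ ∫ x, Φ x w ∂μ) L :=
  let M : C(ProbabilityMeasure X, C(Z, ℝ)) :=
    ContinuousMap.curry ⟨_, continuous_integral_of_continuous_uncurry hΦ⟩
  ContinuousMap.tendsto_iff_tendstoUniformly.1 ((M.continuous.tendsto μ).comp h)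

end ProbabilityMeasure

end MeasureTheory

lemma energy_le_liminf_of_tendsto {X ι : Type*} [TopologicalSpace X]
    [TopologicalSpace.PseudoMetrizableSpace X] [SecondCountableTopology X] [MeasurableSpace X]
    [OpensMeasurableSpace X] {k : X → X → ℝ≥0∞}
    (hk : LowerSemicontinuous fun p : X × X ↦ k p.1 p.2) {L : Filter ι} [L.IsCountablyGenerated]
    {μ : ProbabilityMeasure X} {μs : ι → ProbabilityMeasure X} (h : Tendsto μs L (𝓝 μ)) :
    energy k (μ : Measure X) μ ≤ L.liminf fun i ↦ energy k (μs i : Measure X) (μs i) := by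
  have h_prod : Tendsto (fun i ↦ (μs i).prod (μs i)) L (𝓝 (μ.prod μ)) :=
    (ProbabilityMeasure.continuous_prod.tendsto (μ, μ)).comp (h.prodMk_nhds h)
  exact lintegral_le_liminf_of_lowerSemicontinuous hk fun G hG ↦
    ProbabilityMeasure.le_liminf_measure_open_of_tendsto h_prod hG

lemma TendstoUniformly.apply_eq_of_min_max_eq {Z ι : Type*} {L : Filter ι} [L.NeBot]
    {ψ : ι → Z → ℝ} {ψ' : Z → ℝ} (h : TendstoUniformly ψ ψ' L) {a b : ι → Z} {c : ℝ}
    (ha : ∀ i w, ψ i (a i) ≤ ψ i w) (hb : ∀ i w, ψ i w ≤ ψ i (b i))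
    (ha' : ∀ i, ψ' (a i) = c) (hb' : ∀ i, ψ' (b i) = c) (w : Z) : ψ' w = c := by
  have h_diag : ∀ p : ι → Z, (∀ i, ψ' (p i) = c) → Tendsto (fun i ↦ ψ i (p i)) L (𝓝 c) := by
    intro p hp
    refine Metric.tendsto_nhds.2 fun ε hε ↦ ?_
    filter_upwards [Metric.tendstoUniformly_iff.1 h ε hε] with i hi
    simpa [dist_comm, hp i] using hi (p i)
  exact le_antisymm (le_of_tendsto_of_tendsto' (h.tendsto_at w) (h_diag b hb') (hb · w))
    (le_of_tendsto_of_tendsto' (h_diag a ha') (h.tendsto_at w) (ha · w))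

section CuttingPlane

variable {X Z : Type*} [MeasurableSpace X]

lemma ww_Re_mono (k : X → X → ℝ≥0∞) (Φ : X → Z → ℝ) (g : Z → ℝ) {A B : Set Z} (hAB : A ⊆ B) :
    ww k (Re Φ g A) ≤ ww k (Re Φ g B) :=
  biInf_mono fun _ hμ ↦ ⟨hμ.1, fun w hw ↦ hμ.2 w (hAB hw)⟩

lemma mem_Re_univ_of_tendsto [TopologicalSpace X] [CompactSpace X] [OpensMeasurableSpace X]
    [TopologicalSpace Z] [CompactSpace Z] {Φ : X → Z → ℝ}
    (hΦ : Continuous fun p : X × Z ↦ Φ p.1 p.2) {g : Z → ℝ} {A : Set Z}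
    {μs : ℕ → ProbabilityMeasure X} {μ : ProbabilityMeasure X} (h : Tendsto μs atTop (𝓝 μ))
    (hA : ∀ w ∈ A, ∀ᶠ i in atTop, ∫ x, Φ x w ∂μs i = g w)
    {a b : ℕ → Z} (ha : ∀ i, a i ∈ A) (hb : ∀ i, b i ∈ A)
    (ha_min : ∀ i w, ∫ x, Φ x (a i) ∂μs i - g (a i) ≤ ∫ x, Φ x w ∂μs i - g w)
    (hb_max : ∀ i w, ∫ x, Φ x w ∂μs i - g w ≤ ∫ x, Φ x (b i) ∂μs i - g (b i)) :
    (μ : Measure X) ∈ Re Φ g univ := by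
  have h_unif := ProbabilityMeasure.tendstoUniformly_integral_of_tendsto hΦ h
  have hA_lim : ∀ w ∈ A, ∫ x, Φ x w ∂μ - g w = 0 := fun w hw ↦ sub_eq_zero.2 <|
    tendsto_nhds_unique (h_unif.tendsto_at w)
      (tendsto_const_nhds.congr' ((hA w hw).mono fun _ ↦ Eq.symm))
  have h_const : TendstoUniformly (fun _ : ℕ ↦ g) g atTop :=
    fun _ hu ↦ .of_forall fun _ _ ↦ refl_mem_uniformity hu
  exact ⟨μ.prop, fun w _ ↦ sub_eq_zero.1 <|
    (h_unif.fun_sub h_const).apply_eq_of_min_max_eq ha_min hb_max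
      (fun i ↦ hA_lim _ (ha i)) (fun i ↦ hA_lim _ (hb i)) w⟩

end CuttingPlane

theorem statement17_general {X Z : Type*}
    [TopologicalSpace X] [CompactSpace X] [TopologicalSpace.MetrizableSpace X]
    [MeasurableSpace X] [BorelSpace X]
    [TopologicalSpace Z] [CompactSpace Z]
    (Φ : X → Z → ℝ) (hΦ : Continuous fun p : X × Z => Φ p.1 p.2)
    (g : Z → ℝ)
    (k : X → X → ℝ≥0∞) (hk : LowerSemicontinuous fun p : X × X => k p.1 p.2)
    (z : ℕ → Z) (μn : ℕ → Measure X)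
    -- `μn n` is a minimizer of the energy over `R^e_{Φ,g,Z_{2n}}(X)`
    (hmem : ∀ n, 1 ≤ n → μn n ∈ Re Φ g (z '' Set.Icc 1 (2 * n)))
    (hmin : ∀ n, 1 ≤ n → ∀ ν ∈ Re Φ g (z '' Set.Icc 1 (2 * n)),
      energy k (μn n) (μn n) ≤ energy k ν ν)
    -- `z (2n+1)` minimizes and `z (2n+2)` maximizes `Ψ_n` on `Z`
    (hext : ∀ n, 1 ≤ n →
      (∀ w : Z, (∫ x, Φ x (z (2 * n + 1)) ∂(μn n)) - g (z (2 * n + 1)) ≤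
        (∫ x, Φ x w ∂(μn n)) - g w) ∧
      (∀ w : Z, (∫ x, Φ x w ∂(μn n)) - g w ≤
        (∫ x, Φ x (z (2 * n + 2)) ∂(μn n)) - g (z (2 * n + 2)))) :
    Filter.Tendsto (fun n => ww k (Re Φ g (z '' Set.Icc 1 (2 * n)))) Filter.atTop
      (𝓝 (ww k (Re Φ g Set.univ))) := by
  set w : ℕ → ℝ≥0∞ := fun n ↦ ww k (Re Φ g (z '' Icc 1 (2 * n)))
  have hw_mono : Monotone w := fun m n hmn ↦
    ww_Re_mono k Φ g (image_mono (Icc_subset_Icc_right (by omega)))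
  have hw_le : ⨆ n, w n ≤ ww k (Re Φ g univ) := iSup_le fun n ↦ ww_Re_mono k Φ g (subset_univ _)
  suffices ww k (Re Φ g univ) ≤ ⨆ n, w n from le_antisymm hw_le this ▸ tendsto_atTop_iSup hw_mono
  let ν : ℕ → ProbabilityMeasure X := fun n ↦ ⟨μn (n + 1), (hmem (n + 1) (Nat.le_add_left 1 n)).1⟩
  obtain ⟨μ, φ, hφ, hμ⟩ := CompactSpace.tendsto_subseq ν
  have hμ_mem : (μ : Measure X) ∈ Re Φ g univ := by
    refine mem_Re_univ_of_tendsto hΦ hμ (A := z '' Ici 1) ?_ (fun _ ↦ ⟨_, by simp, rfl⟩)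
      (fun _ ↦ ⟨_, by simp, rfl⟩) (fun _ ↦ (hext _ (Nat.le_add_left 1 _)).1)
      (fun _ ↦ (hext _ (Nat.le_add_left 1 _)).2)
    rintro _ ⟨i, hi, rfl⟩
    filter_upwards [eventually_ge_atTop i] with j hj
    have hφj : j ≤ φ j := hφ.le_apply
    exact (hmem _ (Nat.le_add_left 1 _)).2 _ ⟨i, ⟨hi, by omega⟩, rfl⟩
  calc ww k (Re Φ g univ) ≤ energy k μ μ := iInf₂_le _ hμ_mem
    _ ≤ atTop.liminf fun j ↦ energy k (ν (φ j) : Measure X) (ν (φ j)) :=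
        energy_le_liminf_of_tendsto hk hμ
    _ ≤ ⨆ n, w n := liminf_le_of_frequently_le' <| Frequently.of_forall fun j ↦
        (le_iInf₂ (hmin _ (Nat.le_add_left 1 _)) : _ ≤ w _).trans (le_iSup w _)

/-- Lemma 8, equality case: the cutting plane algorithm converges,
`lim_n w(R^e_{Φ,g,Z_{2n}}(X)) = w(R^e_{Φ,g}(X))`. -/
theorem statement17 {X Z : Type*}
    [TopologicalSpace X] [CompactSpace X] [TopologicalSpace.MetrizableSpace X]
    [MeasurableSpace X] [BorelSpace X]
    [TopologicalSpace Z] [CompactSpace Z] [TopologicalSpace.MetrizableSpace Z]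
    (Φ : X → Z → ℝ) (hΦ : Continuous fun p : X × Z => Φ p.1 p.2)
    (g : Z → ℝ) (hg : Continuous g)
    (k : X → X → ℝ≥0∞) (hk : LowerSemicontinuous fun p : X × X => k p.1 p.2)
    (hsym : ∀ x y, k x y = k y x)
    (hne : (Re Φ g Set.univ).Nonempty)
    (z : ℕ → Z) (μn : ℕ → Measure X)
    -- `μn n` is a minimizer of the energy over `R^e_{Φ,g,Z_{2n}}(X)`
    (hmem : ∀ n, 1 ≤ n → μn n ∈ Re Φ g (z '' Set.Icc 1 (2 * n)))
    (hmin : ∀ n, 1 ≤ n → ∀ ν ∈ Re Φ g (z '' Set.Icc 1 (2 * n)),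
      energy k (μn n) (μn n) ≤ energy k ν ν)
    -- `z (2n+1)` minimizes and `z (2n+2)` maximizes `Ψ_n` on `Z`
    (hext : ∀ n, 1 ≤ n →
      (∀ w : Z, (∫ x, Φ x (z (2 * n + 1)) ∂(μn n)) - g (z (2 * n + 1)) ≤
        (∫ x, Φ x w ∂(μn n)) - g w) ∧
      (∀ w : Z, (∫ x, Φ x w ∂(μn n)) - g w ≤
        (∫ x, Φ x (z (2 * n + 2)) ∂(μn n)) - g (z (2 * n + 2)))) :
    Filter.Tendsto (fun n => ww k (Re Φ g (z '' Set.Icc 1 (2 * n)))) Filter.atTop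
      (𝓝 (ww k (Re Φ g Set.univ))) :=
  statement17_general Φ hΦ g k hk z μn hmem hmin hext
end
end
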